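/- arXiv:1205.3264 — 7 statements merged into one kernel-verified Lean document; each statement's English description precedes it below -/
import Mathlib

section
/- Let E = (E⁰, E¹, r, s) be a topological graph. Then the set E⁰_fin is open in E⁰ (hence E⁰_sce and E⁰_rg are open as well), and E⁰_rg equals the intersection of E⁰_fin with the interior of closure(r(E¹)). -/
open scoped ZeroAtInfty CompactlySupported ComplexOrder

noncomputable section

namespace TopGraphPaper

variable {V G : Type*} [TopologicalSpace V] [TopologicalSpace G]

/-- The set `E⁰_fin` of vertices having a neighbourhood `N` with `r⁻¹(N)` compact. -/
def Efin (r : G → V) : Set V := {v | ∃ N ∈ nhds v, IsCompact (r ⁻¹' N)}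

/-- The set `E⁰_sce = E⁰ \ closure (r(E¹))`. -/
def Esce (r : G → V) : Set V := (closure (Set.range r))ᶜ

/-- The set `E⁰_rg = E⁰_fin \ closure (E⁰_sce)`. -/
def Erg (r : G → V) : Set V := Efin r \ closure (Esce r)

/-- `U ⊆ E¹` is an `s`-section if `s` restricted to `U` is a homeomorphism onto its image. -/
def IsSSection (s : G → V) (U : Set G) : Prop := Topology.IsEmbedding (U.restrict s)

/-- A complex-valued function is nonnegative if all its values are nonnegative reals. -/
def NonnegFn {α : Type*} (x : α → ℂ) : Prop := ∀ a, 0 ≤ x a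

/-- The norm `‖x‖_{C₀(E⁰)} = sup_v √(Σ_{s e = v} |x e|²)` on `C_c(E¹)`. -/
def gnorm (s : G → V) (x : G → ℂ) : ℝ :=
  ⨆ v : V, Real.sqrt (∑' e : (s ⁻¹' {v} : Set G), ‖x (e : G)‖ ^ 2)

variable {B : Type*} [NonUnitalCStarAlgebra B]

/-- A Toeplitz representation of the topological graph `(V, G, r, s)` in the C*-algebra `B`. -/
structure IsToeplitzRep (r s : G → V) (ψ : C_c(G, ℂ) →ₗ[ℂ] B)
    (π : C₀(V, ℂ) →⋆ₙₐ[ℂ] B) : Prop where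
  act : ∀ (f : C₀(V, ℂ)) (x y : C_c(G, ℂ)), (∀ e, y e = f (r e) * x e) → ψ y = π f * ψ x
  inner : ∀ (x : C_c(G, ℂ)) (U : Set G), IsOpen U → IsSSection s U → tsupport ⇑x ⊆ U →
    ∀ g : C₀(V, ℂ), (∀ e, x e ≠ 0 → g (s e) = (‖x e‖ : ℂ) ^ 2) →
      (∀ v, v ∉ s '' Function.support ⇑x → g v = 0) → π g = star (ψ x) * ψ x
  orth : ∀ (x y : C_c(G, ℂ)) (Ux Uy : Set G), IsOpen Ux → IsOpen Uy →
    IsSSection s Ux → IsSSection s Uy → Disjoint Ux Uy →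
    tsupport ⇑x ⊆ Ux → tsupport ⇑y ⊆ Uy → star (ψ x) * ψ y = 0

/-- Covariance of a Toeplitz representation.  Here, for each `f` in the generating family `𝒢`,
the function `gN N` plays the role of `√(f_N)`, so that `f_N = (gN N)^2`. -/
def IsCovariant (r s : G → V) (ψ : C_c(G, ℂ) →ₗ[ℂ] B) (π : C₀(V, ℂ) →⋆ₙₐ[ℂ] B) : Prop :=
  ∃ 𝒢 : Set C₀(V, ℂ),
    (∀ f ∈ 𝒢, HasCompactSupport ⇑f ∧ NonnegFn ⇑f ∧ tsupport ⇑f ⊆ Erg r) ∧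
    closure ((NonUnitalStarAlgebra.adjoin ℂ 𝒢 : NonUnitalStarSubalgebra ℂ C₀(V, ℂ)) :
        Set C₀(V, ℂ)) = {f : C₀(V, ℂ) | ∀ v ∉ Erg r, f v = 0} ∧
    ∀ f ∈ 𝒢, ∃ (𝒩 : Finset (Set G)) (gN : Set G → C_c(G, ℂ)),
      (∀ N ∈ 𝒩, IsOpen N ∧ IsSSection s N) ∧
      r ⁻¹' tsupport ⇑f ⊆ ⋃ N ∈ 𝒩, N ∧
      (∀ N ∈ 𝒩, NonnegFn ⇑(gN N) ∧
        Function.support ⇑(gN N) ⊆ N ∩ r ⁻¹' tsupport ⇑f) ∧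
      (∀ e, ∑ N ∈ 𝒩, (gN N e) ^ 2 = f (r e)) ∧
      π f = ∑ N ∈ 𝒩, ψ (gN N) * star (ψ (gN N))

/-- A local `r`-fibration `(𝒰, W)`. -/
structure IsLocalRFib (r s : G → V) (𝒰 : Finset (Set G)) (W : Set V) : Prop where
  disj : (𝒰 : Set (Set G)).Pairwise Disjoint
  sSec : ∀ U ∈ 𝒰, IsSSection s U
  rSec : ∀ U ∈ 𝒰, IsSSection r U
  pre : r ⁻¹' W = ⋃ U ∈ 𝒰, U
  ran : ∀ U ∈ 𝒰, r '' U = W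

/-- An open local `r`-fibration. -/
def IsOpenLocalRFib (r s : G → V) (𝒰 : Finset (Set G)) (W : Set V) : Prop :=
  IsLocalRFib r s 𝒰 W ∧ IsOpen W ∧ ∀ U ∈ 𝒰, IsOpen U

/-- A precompact local `r`-fibration. -/
def IsPrecompactLocalRFib (r s : G → V) (𝒰 : Finset (Set G)) (W : Set V) : Prop :=
  IsLocalRFib r s 𝒰 W ∧ IsCompact (closure W) ∧ ∀ U ∈ 𝒰, IsCompact (closure U)


variable {V G : Type*} [TopologicalSpace V] [TopologicalSpace G]

/-- The space `Eⁿ` of paths of length `n`, as a subset of `(E¹)ⁿ`. -/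
def PathSet (r s : G → V) (n : ℕ) : Set (Fin n → G) :=
  {μ | ∀ (i : ℕ) (h : i + 1 < n), s (μ ⟨i, by omega⟩) = r (μ ⟨i + 1, h⟩)}

/-- The function `x₁ ◇ ⋯ ◇ xₙ` on `(E¹)ⁿ`. -/
def diam {n : ℕ} (x : Fin n → C_c(G, ℂ)) (μ : Fin n → G) : ℂ := ∏ i, x i (μ i)

/-- `lprod a [b₁,…,bₖ] = a * b₁ * ⋯ * bₖ` (products in a possibly non-unital ring). -/
def lprod {M : Type*} [Mul M] : M → List M → M
  | a, [] => a
  | a, b :: l => lprod (a * b) l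

/-- The product `F 0 * F 1 * ⋯ * F (n-1)` for `n ≥ 1`. -/
def finProd {M : Type*} [Mul M] {n : ℕ} (hn : 0 < n) (F : Fin n → M) : M :=
  lprod (F ⟨0, hn⟩) (List.ofFn fun i : Fin (n - 1) => F ⟨(i : ℕ) + 1, by omega⟩)

/-- The infinite path space `E^∞`. -/
def InfPath (r s : G → V) : Type _ := {z : ℕ → G // ∀ i, s (z i) = r (z (i + 1))}

instance (r s : G → V) : TopologicalSpace (InfPath r s) :=
  inferInstanceAs (TopologicalSpace {z : ℕ → G // ∀ i, s (z i) = r (z (i + 1))})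

/-- The shift map `σ : E^∞ → E^∞`. -/
def shift (r s : G → V) : InfPath r s → InfPath r s :=
  fun z => ⟨fun i => z.1 (i + 1), fun i => z.2 (i + 1)⟩

/-- A list of edges is a (finite) path when consecutive edges compose. -/
def IsPathL (r s : G → V) (μ : List G) : Prop := μ.Chain' fun e f => s e = r f

/-- The cylinder set `Z(μ)` of a finite path `μ` of positive length. -/
def cylP (r s : G → V) (μ : List G) : Set (InfPath r s) :=
  {z | ∀ (i : ℕ) (h : i < μ.length), z.1 i = μ.get ⟨i, h⟩}

/-- The cylinder set `Z(v)` of a vertex `v`. -/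
def cylV (r s : G → V) (v : V) : Set (InfPath r s) := {z | r (z.1 0) = v}

/-- `t_μ`, with the convention `t_v = q_v` for paths `μ` of length zero based at `v`. -/
def tPath {M : Type*} [Mul M] (Q : V → M) (T : G → M) (v : V) : List G → M
  | [] => Q v
  | e :: l => lprod (T e) (l.map T)

variable {B : Type*} [NonUnitalCStarAlgebra B]

/-- A Cuntz–Krieger `E`-family in `B`. -/
structure IsCKFamily (r s : G → V) (Q : V → B) (T : G → B) : Prop where
  proj : ∀ v, star (Q v) = Q v ∧ Q v * Q v = Q v
  orth : ∀ v w, v ≠ w → Q v * Q w = 0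
  srce : ∀ e, star (T e) * T e = Q (s e)
  ck : ∀ (v : V) (F : Finset G), (∀ e, e ∈ F ↔ r e = v) → Q v = ∑ e ∈ F, T e * star (T e)


/-- For a topological graph `E`, the set `E⁰_fin` is open (hence `E⁰_sce` and
`E⁰_rg` are open as well), and `E⁰_rg = E⁰_fin ∩ interior (closure (r(E¹)))`. -/
theorem statement0 {V G : Type*} [TopologicalSpace V] [TopologicalSpace G]
    [LocallyCompactSpace V] [T2Space V] [LocallyCompactSpace G] [T2Space G]
    (r s : G → V) (hr : Continuous r) (hs : IsLocalHomeomorph s) :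
    IsOpen (Efin r) ∧ IsOpen (Esce r) ∧ IsOpen (Erg r) ∧
      Erg r = Efin r ∩ interior (closure (Set.range r)) := by
  have hefin : IsOpen (Efin r) := by
    rw [isOpen_iff_mem_nhds]
    rintro v ⟨N, hN, hc⟩
    filter_upwards [interior_mem_nhds.2 hN] with w hw
    exact ⟨N, mem_interior_iff_mem_nhds.1 hw, hc⟩
  have hkey : Erg r = Efin r ∩ interior (closure (Set.range r)) := by
    unfold Erg Esce
    rw [closure_compl, Set.diff_compl]
  refine ⟨hefin, isClosed_closure.isOpen_compl, ?_, hkey⟩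
  rw [hkey]
  exact hefin.inter isOpen_interior

end TopGraphPaper
end
end

section
/- Let E be a topological graph and let (ψ, π) be a Toeplitz representation of E in a C*-algebra B. Let x₁, x₂ ∈ C_c(E¹) be such that supp(x₁) ∪ supp(x₂) is contained in an open s-section. Then for every g ∈ C₀(E⁰) satisfying g(v) = Σ_{e : s(e) = v} conj(x₁(e)) x₂(e) for all v ∈ E⁰ (for each v this sum has finitely many nonzero terms), one has π(g) = ψ(x₁)* ψ(x₂). -/
open scoped ZeroAtInfty CompactlySupported ComplexOrder

noncomputable section

namespace TopGraphPaper

variable {V G : Type*} [TopologicalSpace V] [TopologicalSpace G]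

variable {B : Type*} [NonUnitalCStarAlgebra B]

variable {V G : Type*} [TopologicalSpace V] [TopologicalSpace G]

variable {B : Type*} [NonUnitalCStarAlgebra B]

lemma exists_transport {V G : Type*} [TopologicalSpace V] [TopologicalSpace G]
    [T2Space V] (s : G → V) (hs : IsLocalHomeomorph s)
    (U : Set G) (hU : IsOpen U) (hUs : IsSSection s U)
    (φ : C_c(G, ℂ)) (hφ : tsupport ⇑φ ⊆ U) :
    ∃ h : C₀(V, ℂ), (∀ e ∈ U, h (s e) = φ e) ∧ ∀ v ∉ s '' U, h v = 0 := by
  classical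
  have hinj : ∀ e ∈ U, ∀ e' ∈ U, s e = s e' → e = e' := by
    intro e he e' he' hee
    have := hUs.injective (a₁ := ⟨e, he⟩) (a₂ := ⟨e', he'⟩) hee
    exact congrArg Subtype.val this
  set h₀ : V → ℂ := fun v => if hv : v ∈ s '' U then φ hv.choose else 0 with hh₀
  have key : ∀ e ∈ U, h₀ (s e) = φ e := by
    intro e he
    have hv : s e ∈ s '' U := ⟨e, he, rfl⟩
    simp only [hh₀, dif_pos hv]
    have hc := hv.choose_spec
    rw [hinj _ hc.1 _ he hc.2]
  have hzero : ∀ v ∉ s '' U, h₀ v = 0 := fun v hv => dif_neg hv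
  have hzero' : ∀ v ∉ s '' (tsupport ⇑φ), h₀ v = 0 := by
    intro v hv
    by_cases hvU : v ∈ s '' U
    · obtain ⟨e, he, rfl⟩ := hvU
      rw [key e he]
      by_contra hne
      exact hv ⟨e, subset_tsupport _ hne, rfl⟩
    · exact hzero v hvU
  have hCc : IsCompact (s '' (tsupport ⇑φ)) := φ.hasCompactSupport.image hs.continuous
  have hcont : Continuous h₀ := by
    rw [continuous_iff_continuousAt]
    intro v
    by_cases hv : v ∈ s '' U
    · obtain ⟨e, heU, rfl⟩ := hv
      obtain ⟨Φ, heΦ, hsΦ⟩ := hs e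
      have hO : IsOpen (s '' (U ∩ Φ.source)) :=
        hs.isOpenMap _ (hU.inter Φ.open_source)
      have hvO : s e ∈ s '' (U ∩ Φ.source) := ⟨e, ⟨heU, heΦ⟩, rfl⟩
      have hOsub : s '' (U ∩ Φ.source) ⊆ Φ.target := by
        rintro _ ⟨e', ⟨-, he'⟩, rfl⟩
        rw [hsΦ]; exact Φ.map_source he'
      have hcsymm : ContinuousAt (⇑φ ∘ ⇑Φ.symm) (s e) := by
        refine ContinuousAt.comp (map_continuous φ).continuousAt ?_
        exact Φ.continuousAt_symm (hOsub hvO)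
      refine hcsymm.congr ?_
      refine Filter.eventuallyEq_of_mem (hO.mem_nhds hvO) ?_
      rintro _ ⟨e', ⟨he'U, he'Φ⟩, rfl⟩
      have : Φ.symm (s e') = e' := by rw [hsΦ]; exact Φ.left_inv he'Φ
      simp only [Function.comp_apply, this, key e' he'U]
    · have hvC : v ∉ s '' (tsupport ⇑φ) := fun hc =>
        hv (Set.image_mono (f := s) hφ hc)
      have hCclosed : IsClosed (s '' (tsupport ⇑φ)) := hCc.isClosed
      refine (continuousAt_const (y := (0:ℂ))).congr ?_
      refine Filter.eventuallyEq_of_mem (hCclosed.isOpen_compl.mem_nhds hvC) ?_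
      intro v' hv'
      exact (hzero' v' hv').symm
  have hcs : HasCompactSupport h₀ := HasCompactSupport.intro hCc hzero'
  exact ⟨⟨⟨h₀, hcont⟩, hcs.is_zero_at_infty⟩, key, hzero⟩

/-- If `supp(x₁) ∪ supp(x₂)` is contained in an open `s`-section, then
`π(⟨x₁, x₂⟩) = ψ(x₁)* ψ(x₂)` for any Toeplitz representation `(ψ, π)`. -/
theorem statement2 {V G : Type*} [TopologicalSpace V] [TopologicalSpace G]
    [LocallyCompactSpace V] [T2Space V] [LocallyCompactSpace G] [T2Space G]
    (r s : G → V) (hr : Continuous r) (hs : IsLocalHomeomorph s)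
    {B : Type*} [NonUnitalCStarAlgebra B]
    (ψ : C_c(G, ℂ) →ₗ[ℂ] B) (π : C₀(V, ℂ) →⋆ₙₐ[ℂ] B) (hT : IsToeplitzRep r s ψ π)
    (x₁ x₂ : C_c(G, ℂ)) (U : Set G) (hU : IsOpen U) (hUs : IsSSection s U)
    (hsub : tsupport ⇑x₁ ∪ tsupport ⇑x₂ ⊆ U) (g : C₀(V, ℂ))
    (hg : ∀ v : V, g v = ∑' e : (s ⁻¹' {v} : Set G),
      starRingEnd ℂ (x₁ (e : G)) * x₂ (e : G)) :
    π g = star (ψ x₁) * ψ x₂ := by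
  classical
  have hx₁U : tsupport ⇑x₁ ⊆ U := Set.union_subset_iff.mp hsub |>.1
  have hx₂U : tsupport ⇑x₂ ⊆ U := Set.union_subset_iff.mp hsub |>.2
  have hinj : ∀ e ∈ U, ∀ e' ∈ U, s e = s e' → e = e' := by
    intro e he e' he' hee
    have := hUs.injective (a₁ := ⟨e, he⟩) (a₂ := ⟨e', he'⟩) hee
    exact congrArg Subtype.val this
  set y : ℂ → C_c(G, ℂ) := fun c => x₂ + c • x₁ with hy
  have hyval : ∀ (c : ℂ) (e : G), y c e = x₂ e + c * x₁ e := by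
    intro c e
    simp [hy]
  have hyU : ∀ c : ℂ, tsupport ⇑(y c) ⊆ U := by
    intro c
    have hsupp : Function.support ⇑(y c) ⊆ tsupport ⇑x₁ ∪ tsupport ⇑x₂ := by
      intro e he
      rw [Function.mem_support, hyval] at he
      by_contra hc
      simp only [Set.mem_union, not_or] at hc
      rw [image_eq_zero_of_notMem_tsupport hc.1, image_eq_zero_of_notMem_tsupport hc.2] at he
      simp at he
    exact (closure_minimal hsupp ((isClosed_tsupport _).union (isClosed_tsupport _))).trans hsub
  have hφcont : ∀ c : ℂ, Continuous fun e => (starRingEnd ℂ) (y c e) * y c e := fun c =>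
    ((Complex.continuous_conj).comp (map_continuous (y c))).mul (map_continuous (y c))
  set φ : ℂ → C_c(G, ℂ) := fun c =>
    ⟨⟨fun e => (starRingEnd ℂ) (y c e) * y c e, hφcont c⟩,
      HasCompactSupport.intro (y c).hasCompactSupport
        (fun e he => by show (starRingEnd ℂ) (y c e) * y c e = 0
                        rw [image_eq_zero_of_notMem_tsupport he]; simp)⟩ with hφ
  have hφval : ∀ (c : ℂ) (e : G), φ c e = (starRingEnd ℂ) (y c e) * y c e := fun _ _ => rfl
  have hφU : ∀ c : ℂ, tsupport ⇑(φ c) ⊆ U := by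
    intro c
    have hsupp : Function.support ⇑(φ c) ⊆ tsupport ⇑(y c) := by
      intro e he
      rw [Function.mem_support, hφval] at he
      refine subset_tsupport _ ?_
      intro h0
      rw [h0] at he; simp at he
    exact (closure_minimal hsupp (isClosed_tsupport _)).trans (hyU c)
  have hmain : ∀ c : ℂ, ∃ gc : C₀(V, ℂ),
      (∀ e ∈ U, gc (s e) = (starRingEnd ℂ) (y c e) * y c e) ∧
      (∀ v ∉ s '' U, gc v = 0) ∧ π gc = star (ψ (y c)) * ψ (y c) := by
    intro c
    obtain ⟨gc, h1, h2⟩ := exists_transport s hs U hU hUs (φ c) (hφU c)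
    have h1' : ∀ e ∈ U, gc (s e) = (starRingEnd ℂ) (y c e) * y c e := by
      intro e he; rw [h1 e he, hφval]
    refine ⟨gc, h1', h2, ?_⟩
    refine hT.inner (y c) U hU hUs (hyU c) gc ?_ ?_
    · intro e hne
      have heU : e ∈ U := hyU c (subset_tsupport _ hne)
      rw [h1' e heU, ← Complex.normSq_eq_conj_mul_self, Complex.normSq_eq_norm_sq]
      norm_cast
    · intro v hv
      by_cases hvU : v ∈ s '' U
      · obtain ⟨e, heU, rfl⟩ := hvU
        rw [h1' e heU]
        by_cases hye : y c e = 0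
        · rw [hye]; simp
        · exact absurd ⟨e, hye, rfl⟩ hv
      · exact h2 v hvU
  choose gc hval hzero hπ using hmain
  have hgdec : g = (4:ℂ)⁻¹ •
      (gc 1 + Complex.I • gc Complex.I - gc (-1) - Complex.I • gc (-Complex.I)) := by
    ext v
    have hrhs : ((4:ℂ)⁻¹ •
        (gc 1 + Complex.I • gc Complex.I - gc (-1) - Complex.I • gc (-Complex.I))) v
        = (4:ℂ)⁻¹ * (gc 1 v + Complex.I * gc Complex.I v - gc (-1) v
            - Complex.I * gc (-Complex.I) v) := by
      simp
    rw [hg v, hrhs]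
    by_cases hv : v ∈ s '' U
    · obtain ⟨e₀, he₀, rfl⟩ := hv
      have hmem : e₀ ∈ (s ⁻¹' {s e₀} : Set G) := rfl
      have htsum : (∑' e : (s ⁻¹' {s e₀} : Set G), (starRingEnd ℂ) (x₁ (e : G)) * x₂ (e : G))
          = (starRingEnd ℂ) (x₁ e₀) * x₂ e₀ := by
        refine tsum_eq_single (⟨e₀, hmem⟩ : (s ⁻¹' {s e₀} : Set G)) ?_
        rintro ⟨e, he⟩ hne
        by_cases h0 : x₁ e = 0
        · rw [h0]; simp
        · exfalso
          have heU : e ∈ U := hx₁U (subset_tsupport _ h0)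
          have hee : e = e₀ := hinj e heU e₀ he₀ he
          exact hne (Subtype.ext hee)
      rw [htsum, hval 1 e₀ he₀, hval Complex.I e₀ he₀, hval (-1) e₀ he₀,
        hval (-Complex.I) e₀ he₀]
      simp only [hyval]
      simp only [map_add, map_mul, map_neg, map_one, Complex.conj_I]
      apply Complex.ext <;> simp <;> ring
    · have hzt : ∀ (e : (s ⁻¹' {v} : Set G)),
          (starRingEnd ℂ) (x₁ (e : G)) * x₂ (e : G) = 0 := by
        rintro ⟨e, he⟩
        by_cases h0 : x₁ e = 0
        · rw [h0]; simp
        · exact absurd ⟨e, hx₁U (subset_tsupport _ h0), he⟩ hv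
      rw [(tsum_congr hzt).trans tsum_zero, hzero 1 v hv, hzero Complex.I v hv,
        hzero (-1) v hv, hzero (-Complex.I) v hv]
      ring
  have hψy : ∀ c : ℂ, ψ (y c) = ψ x₂ + c • ψ x₁ := by
    intro c; rw [hy]; simp
  rw [hgdec, map_smul, map_sub, map_sub, map_add, map_smul, map_smul,
    hπ 1, hπ Complex.I, hπ (-1), hπ (-Complex.I),
    hψy 1, hψy Complex.I, hψy (-1), hψy (-Complex.I)]
  simp only [star_add, star_smul, add_mul, mul_add, smul_mul_assoc, mul_smul_comm,
    smul_smul, smul_add, smul_sub, RCLike.star_def, map_neg, map_one, Complex.conj_I]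
  match_scalars <;> (apply Complex.ext <;> simp <;> ring)


end TopGraphPaper
end
end

section
/- Let E be a topological graph and let (ψ, π) be a Toeplitz representation of E in a C*-algebra B. Let U₁, U₂ ⊆ E¹ be open s-sections and let x₁, x₂ ∈ C_c(E¹) with supp(xᵢ) ⊆ Uᵢ for i = 1, 2. Then for every g ∈ C₀(E⁰) satisfying g(v) = Σ_{e : s(e) = v} conj(x₁(e)) x₂(e) for all v ∈ E⁰ (for each v this sum has finitely many nonzero terms), one has π(g) = ψ(x₁)* ψ(x₂). -/
open scoped ZeroAtInfty CompactlySupported ComplexOrder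

noncomputable section

namespace TopGraphPaper

variable {V G : Type*} [TopologicalSpace V] [TopologicalSpace G]

variable {B : Type*} [NonUnitalCStarAlgebra B]

variable {V G : Type*} [TopologicalSpace V] [TopologicalSpace G]

variable {B : Type*} [NonUnitalCStarAlgebra B]

private lemma polarC' (α β : ℂ) :
    (starRingEnd ℂ) α * β = (4:ℂ)⁻¹ * ((starRingEnd ℂ (β + α) * (β + α))
      + Complex.I * (starRingEnd ℂ (β + Complex.I*α) * (β + Complex.I*α))
      - (starRingEnd ℂ (β - α) * (β - α))
      - Complex.I * (starRingEnd ℂ (β - Complex.I*α) * (β - Complex.I*α))) := by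
  simp only [map_add, map_sub, map_mul, Complex.conj_I]
  ring_nf
  simp [Complex.I_sq]
  ring

private lemma polarB' {B : Type*} [NonUnitalCStarAlgebra B] (p q : B) :
    star p * q = (4:ℂ)⁻¹ • ((star (q + p) * (q + p))
      + Complex.I • (star (q + Complex.I • p) * (q + Complex.I • p))
      - (star (q - p) * (q - p))
      - Complex.I • (star (q - Complex.I • p) * (q - Complex.I • p))) := by
  simp only [star_add, star_sub, star_smul, Complex.star_def, Complex.conj_I,
    add_mul, sub_mul, mul_add, mul_sub, smul_mul_assoc, mul_smul_comm, smul_smul,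
    neg_smul, smul_add, smul_sub, Complex.I_mul_I, neg_mul, mul_neg, neg_neg]
  set_option linter.unnecessarySeqFocus false in
  match_scalars <;> norm_num [Complex.I_mul_I] <;> ring_nf <;> norm_num [Complex.I_sq]

private lemma conj_mul_self_eq (z : ℂ) : (starRingEnd ℂ) z * z = (‖z‖ : ℂ) ^ 2 := by
  rw [← Complex.normSq_eq_conj_mul_self]
  norm_cast
  simp [Complex.normSq_eq_norm_sq]

private lemma isSSection_mono {s : G → V} {U A : Set G} (h : IsSSection s U) (hA : A ⊆ U) :
    IsSSection s A := by
  have : A.restrict s = (U.restrict s) ∘ Set.inclusion hA := rfl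
  rw [IsSSection, this]
  exact h.comp (Topology.IsEmbedding.inclusion hA)

private lemma sSection_inj {s : G → V} {U : Set G} (h : IsSSection s U) {e e' : G}
    (he : e ∈ U) (he' : e' ∈ U) (hse : s e = s e') : e = e' := by
  have := h.injective (a₁ := ⟨e, he⟩) (a₂ := ⟨e', he'⟩) hse
  exact congrArg Subtype.val this

private lemma exists_pairing [T2Space V] (s : G → V) (hs : IsLocalHomeomorph s)
    (U : Set G) (hU : IsOpen U) (hsec : IsSSection s U)
    (z w : C_c(G, ℂ)) (hz : tsupport ⇑z ⊆ U) :
    ∃ P : C₀(V, ℂ), (∀ e ∈ U, P (s e) = starRingEnd ℂ (z e) * w e) ∧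
      (∀ v, P v ≠ 0 → ∃ e ∈ U, s e = v ∧ z e ≠ 0) := by
  classical
  have hτ : ∀ v : s '' U, ∃ e, e ∈ U ∧ s e = v := fun v => by
    obtain ⟨e, he, hse⟩ := v.2; exact ⟨e, he, hse⟩
  set τ : s '' U → G := fun v => (hτ v).choose with hτdef
  have hτU : ∀ v, τ v ∈ U := fun v => (hτ v).choose_spec.1
  have hsτ : ∀ v, s (τ v) = (v : V) := fun v => (hτ v).choose_spec.2
  have hτs : ∀ (e) (he : e ∈ U), τ ⟨s e, ⟨e, he, rfl⟩⟩ = e := by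
    intro e he
    exact sSection_inj hsec (hτU _) he (hsτ ⟨s e, ⟨e, he, rfl⟩⟩)
  have hτcont : Continuous τ := by
    have h1 : Continuous (fun v : s '' U => (⟨τ v, hτU v⟩ : U)) := by
      rw [hsec.continuous_iff]
      have : (U.restrict s) ∘ (fun v : s '' U => (⟨τ v, hτU v⟩ : U)) = Subtype.val := by
        funext v; exact hsτ v
      rw [this]; exact continuous_subtype_val
    exact continuous_subtype_val.comp h1
  set h : V → ℂ := fun v => if hv : v ∈ s '' U then
      starRingEnd ℂ (z (τ ⟨v, hv⟩)) * w (τ ⟨v, hv⟩) else 0 with hdef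
  have hzero : ∀ v, h v ≠ 0 → ∃ e ∈ U, s e = v ∧ z e ≠ 0 := by
    intro v hv
    by_cases hmem : v ∈ s '' U
    · simp only [hdef, dif_pos hmem] at hv
      refine ⟨τ ⟨v, hmem⟩, hτU _, hsτ _, ?_⟩
      intro h0; rw [h0] at hv; simp at hv
    · simp only [hdef, dif_neg hmem] at hv; exact absurd rfl hv
  have hsupp : Function.support h ⊆ s '' tsupport ⇑z := by
    intro v hv
    obtain ⟨e, heU, hse, hze⟩ := hzero v hv
    exact ⟨e, subset_tsupport _ hze, hse⟩
  have hSopen : IsOpen (s '' U) := hs.isOpenMap _ hU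
  have hKcomp : IsCompact (s '' tsupport ⇑z) :=
    (z.hasCompactSupport').image hs.continuous
  have hcont : Continuous h := by
    rw [continuous_iff_continuousAt]
    intro v
    by_cases hv : v ∈ s '' U
    · refine ContinuousOn.continuousAt ?_ (hSopen.mem_nhds hv)
      rw [continuousOn_iff_continuous_restrict]
      have : (s '' U).domRestrict h = fun p => starRingEnd ℂ (z (τ p)) * w (τ p) := by
        funext p; show h p = _; simp only [hdef, dif_pos p.2]
      rw [this]
      exact (Complex.continuous_conj.comp (z.continuous.comp hτcont)).mul
        (w.continuous.comp hτcont)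
    · have hv' : v ∈ (s '' tsupport ⇑z)ᶜ := by
        intro hc
        exact hv (Set.image_mono hz hc)
      refine ContinuousOn.continuousAt ?_ ((hKcomp.isClosed.isOpen_compl).mem_nhds hv')
      refine ContinuousOn.congr (continuousOn_const (c := (0 : ℂ))) ?_
      intro u hu
      by_contra hne
      exact hu (hsupp hne)
  have hcs : HasCompactSupport h :=
    HasCompactSupport.of_support_subset_isCompact hKcomp hsupp
  refine ⟨⟨⟨h, hcont⟩, hcs.is_zero_at_infty⟩, ?_, hzero⟩
  intro e he
  show h (s e) = _
  simp only [hdef, dif_pos (⟨e, he, rfl⟩ : s e ∈ s '' U), hτs e he]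
  exact dif_pos ⟨e, he, rfl⟩


/-- If `supp(x₁)` and `supp(x₂)` are contained in open `s`-sections `U₁`, `U₂`
respectively, then `π(⟨x₁, x₂⟩) = ψ(x₁)* ψ(x₂)` for any Toeplitz representation `(ψ, π)`. -/
theorem statement3 {V G : Type*} [TopologicalSpace V] [TopologicalSpace G]
    [LocallyCompactSpace V] [T2Space V] [LocallyCompactSpace G] [T2Space G]
    (r s : G → V) (hr : Continuous r) (hs : IsLocalHomeomorph s)
    {B : Type*} [NonUnitalCStarAlgebra B]
    (ψ : C_c(G, ℂ) →ₗ[ℂ] B) (π : C₀(V, ℂ) →⋆ₙₐ[ℂ] B) (hT : IsToeplitzRep r s ψ π)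
    (x₁ x₂ : C_c(G, ℂ)) (U₁ U₂ : Set G) (hU₁ : IsOpen U₁) (hU₂ : IsOpen U₂)
    (hUs₁ : IsSSection s U₁) (hUs₂ : IsSSection s U₂)
    (hsub₁ : tsupport ⇑x₁ ⊆ U₁) (hsub₂ : tsupport ⇑x₂ ⊆ U₂) (g : C₀(V, ℂ))
    (hg : ∀ v : V, g v = ∑' e : (s ⁻¹' {v} : Set G),
      starRingEnd ℂ (x₁ (e : G)) * x₂ (e : G)) :
    π g = star (ψ x₁) * ψ x₂ := by
  classical
  set K₁ := tsupport ⇑x₁ with hK₁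
  set K₂ := tsupport ⇑x₂ with hK₂
  obtain ⟨L, hLc, hK₂L, hLU₂⟩ := exists_compact_between x₂.hasCompactSupport' hU₂ hsub₂
  have hK₁L : IsCompact (K₁ ∩ L) := x₁.hasCompactSupport'.inter_right hLc.isClosed
  have hKLsub : K₁ ∩ L ⊆ U₁ ∩ U₂ := fun e he => ⟨hsub₁ he.1, hLU₂ he.2⟩
  obtain ⟨M, hMc, hKLM, hMU⟩ := exists_compact_between hK₁L (hU₁.inter hU₂) hKLsub
  obtain ⟨M₂, hM₂c, hMM₂, hM₂U⟩ := exists_compact_between hMc (hU₁.inter hU₂) hMU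
  obtain ⟨φ, hφ1, hφ0, hφcs, hφ01⟩ := exists_continuous_one_zero_of_isCompact hMc
    (isOpen_interior (s := M₂)).isClosed_compl
    (Set.disjoint_left.mpr fun x hx hc => hc (hMM₂ hx))
  -- the function a = φ • x₁
  have hacont : Continuous (fun e => (φ e : ℂ) * x₁ e) :=
    (Complex.continuous_ofReal.comp φ.continuous).mul x₁.continuous
  have hacs : HasCompactSupport (fun e => (φ e : ℂ) * x₁ e) := by
    apply HasCompactSupport.of_support_subset_isCompact x₁.hasCompactSupport'
    intro e he
    apply subset_tsupport
    intro h0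
    apply he
    show (φ e : ℂ) * x₁ e = 0
    exact mul_eq_zero_of_right _ h0
  set a : C_c(G, ℂ) := ⟨⟨fun e => (φ e : ℂ) * x₁ e, hacont⟩, hacs⟩ with hadef
  have ha_apply : ∀ e, a e = (φ e : ℂ) * x₁ e := fun _ => rfl
  set b : C_c(G, ℂ) := x₁ - a with hbdef
  have hb_apply : ∀ e, b e = x₁ e - a e := fun e => by
    rw [hbdef]; simp
  -- support of a
  have haU : tsupport ⇑a ⊆ U₁ ∩ U₂ := by
    have h1 : Function.support ⇑a ⊆ interior M₂ := by
      intro e he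
      by_contra hc
      apply he
      rw [ha_apply e, hφ0 hc]
      simp
    have h2 : tsupport ⇑a ⊆ M₂ :=
      (closure_mono h1).trans (closure_minimal interior_subset hM₂c.isClosed)
    exact h2.trans hM₂U
  have haU₂ : tsupport ⇑a ⊆ U₂ := haU.trans Set.inter_subset_right
  -- support of b
  have hbsupp : tsupport ⇑b ⊆ K₁ ∩ (interior M)ᶜ := by
    apply closure_minimal _ ((isClosed_tsupport _).inter isOpen_interior.isClosed_compl)
    intro e he
    have hx1 : x₁ e ≠ 0 := by
      intro h0
      apply he
      rw [hb_apply, ha_apply, h0]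
      simp
    refine ⟨subset_tsupport _ hx1, ?_⟩
    intro hint
    apply he
    rw [hb_apply, ha_apply, hφ1 (interior_subset hint)]
    simp
  have hbU : tsupport ⇑b ⊆ U₁ \ L := by
    intro e he
    obtain ⟨heK, heM⟩ := hbsupp he
    refine ⟨hsub₁ heK, ?_⟩
    intro heL
    exact heM (hKLM ⟨heK, heL⟩)
  -- orthogonality : star (ψ b) * ψ x₂ = 0
  have horth : star (ψ b) * ψ x₂ = 0 := by
    refine hT.orth b x₂ (U₁ \ L) (interior L) (hU₁.sdiff hLc.isClosed) isOpen_interior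
      (isSSection_mono hUs₁ Set.diff_subset)
      (isSSection_mono hUs₂ (interior_subset.trans hLU₂)) ?_ hbU hK₂L
    rw [Set.disjoint_left]
    intro e he hi
    exact he.2 (interior_subset hi)
  -- the four polarization elements
  have htsub : ∀ (y : C_c(G, ℂ)), (∀ e, y e ≠ 0 → x₂ e ≠ 0 ∨ a e ≠ 0) →
      tsupport ⇑y ⊆ U₂ := by
    intro y hy
    have h1 : Function.support ⇑y ⊆ K₂ ∪ tsupport ⇑a := by
      intro e he
      rcases hy e he with h | h
      · exact Or.inl (subset_tsupport _ h)
      · exact Or.inr (subset_tsupport _ h)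
    have h2 : tsupport ⇑y ⊆ K₂ ∪ tsupport ⇑a :=
      closure_minimal h1 ((isClosed_tsupport _).union (isClosed_tsupport _))
    intro e he
    rcases h2 he with h | h
    · exact hsub₂ h
    · exact haU₂ h
  have hz₀ : tsupport ⇑(x₂ + a) ⊆ U₂ := by
    apply htsub
    intro e he
    by_contra hc
    push_neg at hc
    apply he
    simp [hc.1, hc.2]
  have hz₁ : tsupport ⇑(x₂ + Complex.I • a) ⊆ U₂ := by
    apply htsub
    intro e he
    by_contra hc
    push_neg at hc
    apply he
    simp [hc.1, hc.2]
  have hz₂ : tsupport ⇑(x₂ - a) ⊆ U₂ := by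
    apply htsub
    intro e he
    by_contra hc
    push_neg at hc
    apply he
    simp [hc.1, hc.2]
  have hz₃ : tsupport ⇑(x₂ - Complex.I • a) ⊆ U₂ := by
    apply htsub
    intro e he
    by_contra hc
    push_neg at hc
    apply he
    simp [hc.1, hc.2]
  -- pairings
  obtain ⟨P, hPi, hPz⟩ := exists_pairing s hs U₂ hU₂ hUs₂ a x₂ haU₂
  obtain ⟨P₀, hP₀i, hP₀z⟩ := exists_pairing s hs U₂ hU₂ hUs₂ (x₂ + a) (x₂ + a) hz₀
  obtain ⟨P₁, hP₁i, hP₁z⟩ := exists_pairing s hs U₂ hU₂ hUs₂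
    (x₂ + Complex.I • a) (x₂ + Complex.I • a) hz₁
  obtain ⟨P₂, hP₂i, hP₂z⟩ := exists_pairing s hs U₂ hU₂ hUs₂ (x₂ - a) (x₂ - a) hz₂
  obtain ⟨P₃, hP₃i, hP₃z⟩ := exists_pairing s hs U₂ hU₂ hUs₂
    (x₂ - Complex.I • a) (x₂ - Complex.I • a) hz₃
  -- the inner axiom applied to each
  have hinner : ∀ (y : C_c(G, ℂ)) (hy : tsupport ⇑y ⊆ U₂) (Q : C₀(V, ℂ)),
      (∀ e ∈ U₂, Q (s e) = starRingEnd ℂ (y e) * y e) →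
      (∀ v, Q v ≠ 0 → ∃ e ∈ U₂, s e = v ∧ y e ≠ 0) →
      π Q = star (ψ y) * ψ y := by
    intro y hy Q hQi hQz
    refine hT.inner y U₂ hU₂ hUs₂ hy Q ?_ ?_
    · intro e he
      rw [hQi e (hy (subset_tsupport _ he)), conj_mul_self_eq]
    · intro v hv
      by_contra h0
      obtain ⟨e, heU, hse, hye⟩ := hQz v h0
      exact hv ⟨e, hye, hse⟩
  have hπ₀ : π P₀ = star (ψ (x₂ + a)) * ψ (x₂ + a) := hinner _ hz₀ _ hP₀i hP₀z
  have hπ₁ : π P₁ = star (ψ (x₂ + Complex.I • a)) * ψ (x₂ + Complex.I • a) :=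
    hinner _ hz₁ _ hP₁i hP₁z
  have hπ₂ : π P₂ = star (ψ (x₂ - a)) * ψ (x₂ - a) := hinner _ hz₂ _ hP₂i hP₂z
  have hπ₃ : π P₃ = star (ψ (x₂ - Complex.I • a)) * ψ (x₂ - Complex.I • a) :=
    hinner _ hz₃ _ hP₃i hP₃z
  -- g = P
  have hbx : ∀ e, starRingEnd ℂ (x₁ e) * x₂ e = starRingEnd ℂ (a e) * x₂ e := by
    intro e
    by_cases h2 : x₂ e = 0
    · rw [h2, mul_zero, mul_zero]
    · by_cases h1 : x₁ e = 0
      · rw [h1, ha_apply, h1, mul_zero]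
      · have heL : e ∈ L := interior_subset (hK₂L (subset_tsupport _ h2))
        have heM : φ e = 1 := hφ1 (interior_subset (hKLM ⟨subset_tsupport _ h1, heL⟩))
        rw [ha_apply, heM]
        norm_num
  have hgP : g = P := by
    ext v
    rw [hg v]
    rw [tsum_congr (fun e : (s ⁻¹' {v} : Set G) => hbx (e : G))]
    by_cases hv : v ∈ s '' U₂
    · obtain ⟨e₀, he₀U, he₀s⟩ := hv
      have he₀ : (e₀ : G) ∈ (s ⁻¹' {v} : Set G) := by simp [he₀s]
      rw [tsum_eq_single (⟨e₀, he₀⟩ : (s ⁻¹' {v} : Set G)) ?_]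
      · have hP := hPi e₀ he₀U
        rw [he₀s] at hP
        exact hP.symm
      · intro e' hne
        by_cases h2 : x₂ (e' : G) = 0
        · rw [h2, mul_zero]
        · exfalso
          apply hne
          have he'U : (e' : G) ∈ U₂ := hsub₂ (subset_tsupport _ h2)
          have hse' : s (e' : G) = v := e'.2
          have : (e' : G) = e₀ := sSection_inj hUs₂ he'U he₀U (by rw [hse', he₀s])
          exact Subtype.ext this
    · have hterm : ∀ e : (s ⁻¹' {v} : Set G), starRingEnd ℂ (a (e : G)) * x₂ (e : G) = 0 := by
        intro e
        by_cases h2 : x₂ (e : G) = 0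
        · rw [h2, mul_zero]
        · exact absurd ⟨(e : G), hsub₂ (subset_tsupport _ h2), e.2⟩ hv
      rw [tsum_congr hterm, tsum_zero]
      by_contra hP0
      obtain ⟨e, heU, hse, -⟩ := hPz v (Ne.symm hP0)
      exact hv ⟨e, heU, hse⟩
  -- polarization identity in C₀
  have hcomb : P = (4:ℂ)⁻¹ • (P₀ + Complex.I • P₁ - P₂ - Complex.I • P₃) := by
    ext v
    by_cases hv : v ∈ s '' U₂
    · obtain ⟨e, heU, hse⟩ := hv
      subst hse
      rw [hPi e heU]
      have e0 := hP₀i e heU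
      have e1 := hP₁i e heU
      have e2 := hP₂i e heU
      have e3 := hP₃i e heU
      simp only [CompactlySupportedContinuousMap.coe_add,
        CompactlySupportedContinuousMap.coe_sub, CompactlySupportedContinuousMap.coe_smul,
        Pi.add_apply, Pi.sub_apply, Pi.smul_apply, smul_eq_mul] at e0 e1 e2 e3
      simp only [ZeroAtInftyContinuousMap.coe_smul, ZeroAtInftyContinuousMap.coe_add,
        ZeroAtInftyContinuousMap.coe_sub, Pi.smul_apply, Pi.add_apply, Pi.sub_apply,
        smul_eq_mul, e0, e1, e2, e3]
      exact polarC' (a e) (x₂ e)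
    · have hP' : P v = 0 := by
        by_contra h0
        obtain ⟨e, heU, hse, -⟩ := hPz v h0
        exact hv ⟨e, heU, hse⟩
      have hP0' : P₀ v = 0 := by
        by_contra h0
        obtain ⟨e, heU, hse, -⟩ := hP₀z v h0
        exact hv ⟨e, heU, hse⟩
      have hP1' : P₁ v = 0 := by
        by_contra h0
        obtain ⟨e, heU, hse, -⟩ := hP₁z v h0
        exact hv ⟨e, heU, hse⟩
      have hP2' : P₂ v = 0 := by
        by_contra h0
        obtain ⟨e, heU, hse, -⟩ := hP₂z v h0
        exact hv ⟨e, heU, hse⟩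
      have hP3' : P₃ v = 0 := by
        by_contra h0
        obtain ⟨e, heU, hse, -⟩ := hP₃z v h0
        exact hv ⟨e, heU, hse⟩
      simp only [ZeroAtInftyContinuousMap.coe_smul, ZeroAtInftyContinuousMap.coe_add,
        ZeroAtInftyContinuousMap.coe_sub, Pi.smul_apply, Pi.add_apply, Pi.sub_apply,
        smul_eq_mul, hP', hP0', hP1', hP2', hP3']
      ring
  -- conclude
  have hπP : π P = star (ψ a) * ψ x₂ := by
    rw [hcomb]
    simp only [map_smul, map_sub, map_add]
    rw [hπ₀, hπ₁, hπ₂, hπ₃]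
    simp only [map_add, map_sub, map_smul]
    exact (polarB' (ψ a) (ψ x₂)).symm
  have hx₁ab : ψ x₁ = ψ a + ψ b := by
    rw [hbdef, map_sub]
    abel
  rw [hgP, hπP, hx₁ab, star_add, add_mul, horth, add_zero]

end TopGraphPaper
end
end

section
/- Let E = (E⁰, E¹, r, s) be a topological graph such that r is a local homeomorphism, and let v ∈ E⁰_fin. Then the fiber r⁻¹(v) is finite, and there exists an open neighbourhood V of v such that the fiber r⁻¹(w) has exactly |r⁻¹(v)| elements for every w ∈ V. -/
open scoped ZeroAtInfty CompactlySupported ComplexOrder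

noncomputable section

namespace TopGraphPaper

variable {V G : Type*} [TopologicalSpace V] [TopologicalSpace G]

variable {B : Type*} [NonUnitalCStarAlgebra B]

variable {V G : Type*} [TopologicalSpace V] [TopologicalSpace G]

variable {B : Type*} [NonUnitalCStarAlgebra B]

/-- If `r` is a local homeomorphism and `v ∈ E⁰_fin`, then the fiber `r⁻¹(v)`
is finite, and on some open neighbourhood of `v` all fibers have exactly `|r⁻¹(v)|`
elements. -/
theorem statement9 {V G : Type*} [TopologicalSpace V] [TopologicalSpace G]
    [LocallyCompactSpace V] [T2Space V] [LocallyCompactSpace G] [T2Space G]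
    (r s : G → V) (hr : Continuous r) (hs : IsLocalHomeomorph s)
    (hrlh : IsLocalHomeomorph r) (v : V) (hv : v ∈ Efin r) :
    (r ⁻¹' {v}).Finite ∧
      ∃ W : Set V, IsOpen W ∧ v ∈ W ∧
        ∀ w ∈ W, (r ⁻¹' {w}).ncard = (r ⁻¹' {v}).ncard := by
  obtain ⟨N, hN, hK⟩ := hv
  -- local inverse charts for r
  choose φ hφmem hφeq using fun e : G => hrlh e
  have hinj : ∀ e : G, Set.InjOn r (φ e).source := by
    intro e
    rw [hφeq e]
    exact (φ e).injOn
  set F := r ⁻¹' {v} with hF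
  have hFclosed : IsClosed F := isClosed_singleton.preimage hr
  have hFsub : F ⊆ r ⁻¹' N := fun g hg => by
    simp only [hF, Set.mem_preimage, Set.mem_singleton_iff] at hg
    simp [Set.mem_preimage, hg, mem_of_mem_nhds hN]
  have hFcomp : IsCompact F := hK.of_isClosed_subset hFclosed hFsub
  -- F is finite
  have hFfin : F.Finite := by
    obtain ⟨t, htF, htfin, hcov⟩ := hFcomp.elim_finite_subcover_image
      (fun e (_ : e ∈ F) => (φ e).open_source)
      (fun g hg => Set.mem_biUnion hg (hφmem g))
    have hsub : ∀ e ∈ t, (F ∩ (φ e).source).Finite := by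
      intro e _
      refine Set.Subsingleton.finite ?_
      rintro a ⟨haF, haS⟩ b ⟨hbF, hbS⟩
      exact hinj e haS hbS (by simp only [hF, Set.mem_preimage,
        Set.mem_singleton_iff] at haF hbF; rw [haF, hbF])
    refine Set.Finite.subset (htfin.biUnion hsub) ?_
    intro g hg
    obtain ⟨e, he, hge⟩ := Set.mem_iUnion₂.mp (hcov hg)
    exact Set.mem_biUnion he ⟨hg, hge⟩
  refine ⟨hFfin, ?_⟩
  -- pairwise disjoint open neighborhoods of the fiber points
  obtain ⟨D, hD, hDdisj⟩ := hFfin.t2_separation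
  set U : G → Set G := fun e => D e ∩ (φ e).source with hU
  have hUopen : ∀ e, IsOpen (U e) := fun e =>
    (hD e).2.inter (φ e).open_source
  have hUmem : ∀ e, e ∈ U e := fun e => ⟨(hD e).1, hφmem e⟩
  have hUinj : ∀ e, Set.InjOn r (U e) := fun e =>
    (hinj e).mono Set.inter_subset_right
  have hUdisj : ∀ e ∈ F, ∀ f ∈ F, e ≠ f → Disjoint (U e) (U f) := fun e he f hf hef =>
    ((hDdisj he hf hef).mono Set.inter_subset_left Set.inter_subset_left)
  -- the compact C and neighborhood W
  set C : Set G := r ⁻¹' N \ ⋃ e ∈ F, U e with hC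
  have hCcomp : IsCompact C :=
    hK.diff (isOpen_biUnion fun e _ => hUopen e)
  have hrC : IsClosed (r '' C) := (hCcomp.image hr).isClosed
  have hropen : IsOpenMap r := hrlh.isOpenMap
  set W : Set V := interior N ∩ (⋂ e ∈ F, r '' U e) ∩ (r '' C)ᶜ with hW
  have hWopen : IsOpen W :=
    ((isOpen_interior.inter (hFfin.isOpen_biInter fun e _ => hropen _ (hUopen e)))).inter
      hrC.isOpen_compl
  have hvW : v ∈ W := by
    refine ⟨⟨mem_interior_iff_mem_nhds.mpr hN, ?_⟩, ?_⟩
    · refine Set.mem_biInter fun e he => ⟨e, hUmem e, ?_⟩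
      simpa [hF] using he
    · rintro ⟨g, hgC, hgv⟩
      have hgF : g ∈ F := by simp [hF, hgv]
      exact hgC.2 (Set.mem_biUnion hgF (hUmem g))
  refine ⟨W, hWopen, hvW, fun w hw => ?_⟩
  obtain ⟨⟨hwN, hwU⟩, hwC⟩ := hw
  -- pick the unique preimage of w in each U e
  have hpick : ∀ e, e ∈ F → ∃ g, g ∈ U e ∧ r g = w := by
    intro e he
    obtain ⟨g, hg, hgr⟩ := Set.mem_iInter₂.mp hwU e he
    exact ⟨g, hg, hgr⟩
  choose! g hgU hgr using hpick
  have himg : r ⁻¹' {w} = g '' F := by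
    ext h
    constructor
    · intro hh
      simp only [Set.mem_preimage, Set.mem_singleton_iff] at hh
      have hhN : h ∈ r ⁻¹' N := by
        simp [Set.mem_preimage, hh, interior_subset hwN]
      have hhC : h ∉ C := fun hc => hwC ⟨h, hc, hh⟩
      have : h ∈ ⋃ e ∈ F, U e := by
        by_contra hcon
        exact hhC ⟨hhN, hcon⟩
      obtain ⟨e, he, hhe⟩ := Set.mem_iUnion₂.mp this
      refine ⟨e, he, ?_⟩
      exact hUinj e (hgU e he) hhe (by rw [hgr e he, hh])
    · rintro ⟨e, he, rfl⟩
      simp [Set.mem_preimage, hgr e he]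
  rw [himg, hF]
  refine Set.ncard_image_of_injOn ?_
  intro a ha b hb hab
  by_contra hne
  exact Set.disjoint_left.mp (hUdisj a ha b hb hne) (hgU a ha)
    (hab ▸ hgU b hb)


end TopGraphPaper
end
end

section
/- Let E = (E⁰, E¹, r, s) be a topological graph such that r is a local homeomorphism and r(E¹) is closed in E⁰. Then for every v ∈ E⁰_rg there exists a precompact open local r-fibration (𝒰, V) such that v ∈ V ⊆ closure(V) ⊆ E⁰_rg. -/
open scoped ZeroAtInfty CompactlySupported ComplexOrder

noncomputable section

namespace TopGraphPaper

variable {V G : Type*} [TopologicalSpace V] [TopologicalSpace G]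

variable {B : Type*} [NonUnitalCStarAlgebra B]

variable {V G : Type*} [TopologicalSpace V] [TopologicalSpace G]

variable {B : Type*} [NonUnitalCStarAlgebra B]

/-- If `f` agrees with a partial homeomorphism `φ` and `A ⊆ φ.source`, then `f` restricted
to `A` is an embedding. -/
lemma isEmbedding_restrict_of_partialHomeomorph {X Y : Type*} [TopologicalSpace X]
    [TopologicalSpace Y] {f : X → Y} (φ : OpenPartialHomeomorph X Y) (hf : f = φ)
    {A : Set X} (hA : A ⊆ φ.source) : Topology.IsEmbedding (A.restrict f) := by
  subst hf
  have h1 := φ.isOpenEmbedding_restrict.isEmbedding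
  have h2 : Topology.IsEmbedding (Set.inclusion hA) := Topology.IsEmbedding.inclusion hA
  exact h1.comp h2

/-- `Efin` is open when `V` is locally compact Hausdorff. -/
lemma isOpen_Efin {V G : Type*} [TopologicalSpace V] [TopologicalSpace G]
    [LocallyCompactSpace V] [T2Space V] (r : G → V) (hr : Continuous r) :
    IsOpen (Efin r) := by
  rw [isOpen_iff_mem_nhds]
  rintro w ⟨M, hM, hMc⟩
  have hwM : w ∈ interior M := mem_interior_iff_mem_nhds.mpr hM
  obtain ⟨K', hK'c, hwK', hK'M⟩ := exists_compact_subset isOpen_interior hwM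
  have hpre : IsCompact (r ⁻¹' K') :=
    hMc.of_isClosed_subset (hK'c.isClosed.preimage hr)
      (Set.preimage_mono (hK'M.trans interior_subset))
  refine Filter.mem_of_superset (isOpen_interior.mem_nhds hwK') ?_
  intro u hu
  exact ⟨K', mem_nhds_iff.mpr ⟨interior K', interior_subset, isOpen_interior, hu⟩, hpre⟩

/-- If `r` is a local homeomorphism and `r(E¹)` is closed, then every
`v ∈ E⁰_rg` admits a precompact open local `r`-fibration `(𝒰, W)` with
`v ∈ W ⊆ closure W ⊆ E⁰_rg`. -/
theorem statement10 {V G : Type*} [TopologicalSpace V] [TopologicalSpace G]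
    [LocallyCompactSpace V] [T2Space V] [LocallyCompactSpace G] [T2Space G]
    (r s : G → V) (hr : Continuous r) (hs : IsLocalHomeomorph s)
    (hrlh : IsLocalHomeomorph r) (hclosed : IsClosed (Set.range r))
    (v : V) (hv : v ∈ Erg r) :
    ∃ (𝒰 : Finset (Set G)) (W : Set V),
      IsOpenLocalRFib r s 𝒰 W ∧ IsPrecompactLocalRFib r s 𝒰 W ∧
      v ∈ W ∧ closure W ⊆ Erg r := by
  classical
  obtain ⟨hvfin, hvreg⟩ := hv
  obtain ⟨N, hN, hKcpt⟩ := hvfin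
  -- `Erg r` is open
  have hErgOpen : IsOpen (Erg r) := (isOpen_Efin r hr).sdiff isClosed_closure
  -- the fiber over `v` is compact
  set F : Set G := r ⁻¹' {v} with hF
  have hFcl : IsClosed F := isClosed_singleton.preimage hr
  have hFsub : F ⊆ r ⁻¹' N := by
    intro x hx
    simp only [hF, Set.mem_preimage, Set.mem_singleton_iff] at hx
    simp [Set.mem_preimage, hx, mem_of_mem_nhds hN]
  have hFcpt : IsCompact F := hKcpt.of_isClosed_subset hFcl hFsub
  have hropen : IsOpenMap r := hrlh.isOpenMap
  -- charts for `r` and `s`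
  choose φr hφr hreq using hrlh
  choose φs hφs hseq using hs
  -- precompact neighbourhoods
  choose K hKc hKint _hKu using fun e : G => exists_compact_subset isOpen_univ (Set.mem_univ e)
  -- the fiber is finite
  have hFfin : F.Finite := by
    obtain ⟨t, htF, htfin, hcov⟩ := hFcpt.elim_finite_subcover_image
      (b := F) (c := fun e => (φr e).source) (fun e _ => (φr e).open_source)
      (fun x hx => Set.mem_biUnion hx (hφr x))
    refine Set.Finite.subset htfin ?_
    intro x hx
    obtain ⟨e, het, hxe⟩ := Set.mem_iUnion₂.mp (hcov hx)
    have hrx : r x = v := hx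
    have hre : r e = v := htF het
    have : x = e := by
      have h1 : (φr e) x = (φr e) e := by
        rw [← hreq e]; rw [hrx, hre]
      exact (φr e).injOn hxe (hφr e) h1
    rwa [this]
  -- pairwise disjoint open separation of the fiber
  obtain ⟨D, hD, hDdisj⟩ := hFfin.t2_separation
  -- the basic bisections around each fiber point
  set U0 : G → Set G := fun e =>
    (φr e).source ∩ (φs e).source ∩ interior (K e) ∩ D e with hU0
  have hU0open : ∀ e, IsOpen (U0 e) :=
    fun e => ((((φr e).open_source.inter (φs e).open_source).inter
      isOpen_interior).inter (hD e).2)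
  have hU0mem : ∀ e, e ∈ U0 e :=
    fun e => ⟨⟨⟨hφr e, hφs e⟩, hKint e⟩, (hD e).1⟩
  set Fs : Finset G := hFfin.toFinset with hFs
  have hFsF : ∀ e, e ∈ Fs ↔ e ∈ F := fun e => hFfin.mem_toFinset
  have hFcover : F ⊆ ⋃ e ∈ Fs, U0 e :=
    fun e he => Set.mem_biUnion ((hFsF e).mpr he) (hU0mem e)
  -- the compact leftover set and its image
  set C : Set G := (r ⁻¹' N) \ ⋃ e ∈ Fs, U0 e with hC
  have hCcpt : IsCompact C :=
    hKcpt.diff (isOpen_biUnion fun e _ => hU0open e)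
  have hrCcl : IsClosed (r '' C) := (hCcpt.image hr).isClosed
  -- the open set W₀
  set W0 : Set V := interior N ∩ (r '' C)ᶜ ∩ (⋂ e ∈ Fs, r '' U0 e) ∩ Erg r with hW0
  have hW0open : IsOpen W0 :=
    (((isOpen_interior.inter hrCcl.isOpen_compl).inter
      (isOpen_biInter_finset fun e _ => hropen _ (hU0open e))).inter hErgOpen)
  have hvW0 : v ∈ W0 := by
    refine ⟨⟨⟨mem_interior_iff_mem_nhds.mpr hN, ?_⟩, ?_⟩, ⟨⟨N, hN, hKcpt⟩, hvreg⟩⟩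
    · rintro ⟨x, hxC, hx⟩
      exact hxC.2 (hFcover hx)
    · refine Set.mem_biInter fun e he => ?_
      exact ⟨e, hU0mem e, (hFsF e).mp he⟩
  -- shrink to a precompact open neighbourhood
  obtain ⟨Kw, hKwc, hvint, hKwW0⟩ := exists_compact_subset hW0open hvW0
  set W : Set V := interior Kw with hW
  have hWopen : IsOpen W := isOpen_interior
  have hWW0 : W ⊆ W0 := interior_subset.trans hKwW0
  have hclW : closure W ⊆ Kw := closure_minimal interior_subset hKwc.isClosed
  have hclWcpt : IsCompact (closure W) := hKwc.of_isClosed_subset isClosed_closure hclW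
  have hclWErg : closure W ⊆ Erg r := fun w hw => (hKwW0 (hclW hw)).2
  -- the collection of bisections
  set 𝒰 : Finset (Set G) := Fs.image (fun e => U0 e ∩ r ⁻¹' W) with h𝒰
  have hmem𝒰 : ∀ A ∈ 𝒰, ∃ e ∈ Fs, A = U0 e ∩ r ⁻¹' W := by
    intro A hA
    obtain ⟨e, he, rfl⟩ := Finset.mem_image.mp hA
    exact ⟨e, he, rfl⟩
  -- the local r-fibration structure
  have hfib : IsLocalRFib r s 𝒰 W := by
    constructor
    · -- pairwise disjoint
      intro A hA B hB hAB
      obtain ⟨e, he, rfl⟩ := hmem𝒰 A hA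
      obtain ⟨f, hf, rfl⟩ := hmem𝒰 B hB
      have hef : e ≠ f := fun h => hAB (by rw [h])
      have hdj : Disjoint (D e) (D f) := hDdisj ((hFsF e).mp he) ((hFsF f).mp hf) hef
      exact hdj.mono (fun x hx => hx.1.2) (fun x hx => hx.1.2)
    · -- s-sections
      intro A hA
      obtain ⟨e, _, rfl⟩ := hmem𝒰 A hA
      exact isEmbedding_restrict_of_partialHomeomorph (φs e) (hseq e)
        (fun x hx => hx.1.1.1.2)
    · -- r-sections
      intro A hA
      obtain ⟨e, _, rfl⟩ := hmem𝒰 A hA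
      exact isEmbedding_restrict_of_partialHomeomorph (φr e) (hreq e)
        (fun x hx => hx.1.1.1.1)
    · -- preimage equals union
      apply Set.Subset.antisymm
      · intro x hx
        have hW0x : r x ∈ W0 := hWW0 hx
        have hxN : x ∈ r ⁻¹' N := Set.mem_preimage.mpr (interior_subset hW0x.1.1.1)
        have hxU : x ∈ ⋃ e ∈ Fs, U0 e := by
          by_contra hxn
          exact hW0x.1.1.2 ⟨x, ⟨hxN, hxn⟩, rfl⟩
        obtain ⟨e, he, hxe⟩ := Set.mem_iUnion₂.mp hxU
        refine Set.mem_biUnion (Finset.mem_image.mpr ⟨e, he, rfl⟩) ⟨hxe, hx⟩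
      · intro x hx
        obtain ⟨A, hA, hxA⟩ := Set.mem_iUnion₂.mp hx
        obtain ⟨e, _, rfl⟩ := hmem𝒰 A hA
        exact hxA.2
    · -- range equals W
      intro A hA
      obtain ⟨e, he, rfl⟩ := hmem𝒰 A hA
      apply Set.Subset.antisymm
      · rintro _ ⟨x, hx, rfl⟩
        exact hx.2
      · intro w hw
        have hwim : w ∈ r '' U0 e := Set.mem_iInter₂.mp ((hWW0 hw).1.2) e he
        obtain ⟨x, hx, rfl⟩ := hwim
        exact ⟨x, ⟨hx, hw⟩, rfl⟩
  refine ⟨𝒰, W, ⟨hfib, hWopen, ?_⟩, ⟨hfib, hclWcpt, ?_⟩, hvint, hclWErg⟩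
  · intro A hA
    obtain ⟨e, _, rfl⟩ := hmem𝒰 A hA
    exact (hU0open e).inter (hWopen.preimage hr)
  · intro A hA
    obtain ⟨e, _, rfl⟩ := hmem𝒰 A hA
    have h1 : closure (U0 e ∩ r ⁻¹' W) ⊆ K e :=
      closure_minimal (fun x hx => interior_subset hx.1.1.2) (hKc e).isClosed
    exact (hKc e).of_isClosed_subset isClosed_closure h1


end TopGraphPaper
end
end

section
/- Let E = (E⁰, E¹, r, s) be a topological graph such that r is a local homeomorphism and r(E¹) is closed in E⁰. Let 𝒢 be the set of all nonnegative functions f ∈ C_c(E⁰_rg) such that supp(f) ⊆ V for some open local r-fibration (𝒰, V). Then the linear span of 𝒢 equals C_c(E⁰_rg); in particular, 𝒢 generates C₀(E⁰_rg) as a C*-algebra (the smallest closed *-subalgebra of C₀(E⁰) containing 𝒢 is C₀(E⁰_rg)). -/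
open scoped ZeroAtInfty CompactlySupported ComplexOrder

noncomputable section

namespace TopGraphPaper

variable {V G : Type*} [TopologicalSpace V] [TopologicalSpace G]

variable {B : Type*} [NonUnitalCStarAlgebra B]

variable {V G : Type*} [TopologicalSpace V] [TopologicalSpace G]

variable {B : Type*} [NonUnitalCStarAlgebra B]

lemma isOpen_Efin_s11 (r : G → V) : IsOpen (Efin r) := by
  rw [isOpen_iff_mem_nhds]
  rintro v ⟨N, hN, hK⟩
  exact Filter.mem_of_superset (interior_mem_nhds.mpr hN)
    (fun w hw => ⟨N, mem_interior_iff_mem_nhds.mp hw, hK⟩)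

lemma isOpen_Erg (r : G → V) : IsOpen (Erg r) :=
  (isOpen_Efin_s11 r).sdiff isClosed_closure

lemma isEmbedding_restrict_of_subset_source (χ : OpenPartialHomeomorph G V) {U : Set G}
    (hU : U ⊆ χ.source) : Topology.IsEmbedding (U.restrict ⇑χ) := by
  have h : U.restrict ⇑χ =
      (Subtype.val : χ.target → V) ∘ (χ.toHomeomorphSourceTarget ∘ Set.inclusion hU) := rfl
  rw [h]
  exact Topology.IsEmbedding.subtypeVal.comp
    (χ.toHomeomorphSourceTarget.isEmbedding.comp (Topology.IsEmbedding.inclusion hU))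

lemma exists_disjoint_opens [T2Space G] (F : Finset G) :
    ∃ O : G → Set G, (∀ e, IsOpen (O e) ∧ e ∈ O e) ∧
      ∀ e ∈ F, ∀ f ∈ F, e ≠ f → Disjoint (O e) (O f) := by
  classical
  have sep : ∀ e f : G, e ≠ f → ∃ A B : Set G,
      IsOpen A ∧ IsOpen B ∧ e ∈ A ∧ f ∈ B ∧ Disjoint A B := fun e f h => t2_separation h
  choose A B hAo hBo heA hfB hAB using sep
  set C : G → G → Set G := fun e f => if h : e ≠ f then A e f h ∩ B f e (Ne.symm h) else Set.univ
    with hC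
  have hCopen : ∀ e f, IsOpen (C e f) := by
    intro e f
    by_cases h : e ≠ f
    · simp only [hC, dif_pos h]; exact (hAo e f h).inter (hBo f e (Ne.symm h))
    · simp only [hC, dif_neg h]; exact isOpen_univ
  have hCe : ∀ e f, e ∈ C e f := by
    intro e f
    by_cases h : e ≠ f
    · simp only [hC, dif_pos h]; exact ⟨heA e f h, hfB f e (Ne.symm h)⟩
    · simp only [hC, dif_neg h]; trivial
  refine ⟨fun e => ⋂ f ∈ F, C e f, fun e => ⟨?_, ?_⟩, ?_⟩
  · exact isOpen_biInter_finset (fun f _ => hCopen e f)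
  · exact Set.mem_biInter (fun f _ => hCe e f)
  · intro e he f hf hef
    have h1 : (⋂ g ∈ F, C e g) ⊆ A e f hef := by
      refine (Set.biInter_subset_of_mem hf).trans ?_
      simp only [hC, dif_pos hef]; exact Set.inter_subset_left
    have h2 : (⋂ g ∈ F, C f g) ⊆ B e f hef := by
      refine (Set.biInter_subset_of_mem he).trans ?_
      have hfe : f ≠ e := Ne.symm hef
      simp only [hC, dif_pos hfe]
      exact Set.inter_subset_right
    exact (hAB e f hef).mono h1 h2

lemma fiber_finite [T2Space V] {r : G → V} (hr : Continuous r) (hrlh : IsLocalHomeomorph r)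
    {N : Set V} (hK : IsCompact (r ⁻¹' N)) {v : V} (hvN : N ∈ nhds v) :
    (r ⁻¹' {v}).Finite := by
  classical
  have hsub : r ⁻¹' {v} ⊆ r ⁻¹' N := fun x hx => by
    simp only [Set.mem_preimage, Set.mem_singleton_iff] at hx
    simp [Set.mem_preimage, hx, mem_of_mem_nhds hvN]
  have hcl : IsClosed (r ⁻¹' {v}) := isClosed_singleton.preimage hr
  have hcpt : IsCompact (r ⁻¹' {v}) := hK.of_isClosed_subset hcl hsub
  choose χ hχ hrχ using hrlh
  have hcov : r ⁻¹' {v} ⊆ ⋃ e : (r ⁻¹' {v} : Set G), (χ e).source := fun x hx =>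
    Set.mem_iUnion.mpr ⟨⟨x, hx⟩, hχ x⟩
  obtain ⟨t, ht⟩ := hcpt.elim_finite_subcover (fun e : (r ⁻¹' {v} : Set G) => (χ e).source)
    (fun e => (χ e).open_source) hcov
  have hfin : (Subtype.val '' (t : Set (r ⁻¹' {v} : Set G))).Finite :=
    Set.Finite.image _ t.finite_toSet
  refine Set.Finite.subset hfin ?_
  intro x hx
  obtain ⟨e, het, hxe⟩ := Set.mem_iUnion₂.mp (ht hx)
  have hxs : x ∈ (χ (e : G)).source := hxe
  have hes : (e : G) ∈ (χ (e : G)).source := hχ (e : G)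
  have hrr : (χ (e : G)) x = (χ (e : G)) (e : G) := by
    rw [← hrχ (e : G)]
    have hxv : r x = v := hx
    have hev : r (e : G) = v := e.2
    rw [hxv, hev]
  exact ⟨e, het, ((χ (e : G)).injOn hxs hes hrr).symm⟩



lemma exists_openLocalRFib [T2Space V] [T2Space G]
    (r s : G → V) (hr : Continuous r) (hs : IsLocalHomeomorph s) (hrlh : IsLocalHomeomorph r)
    (hclosed : IsClosed (Set.range r)) {v : V} (hv : v ∈ Erg r) :
    ∃ (𝒰 : Finset (Set G)) (W : Set V), IsOpenLocalRFib r s 𝒰 W ∧ v ∈ W ∧ W ⊆ Erg r := by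
  classical
  obtain ⟨hfin, hnsce⟩ := hv
  obtain ⟨N, hN, hKcpt⟩ := hfin
  -- the fiber over `v` is finite and nonempty
  have hvr : v ∈ Set.range r := by
    have h1 : v ∉ Esce r := fun h => hnsce (subset_closure h)
    simpa [Esce, hclosed.closure_eq] using h1
  have hFfin : (r ⁻¹' {v}).Finite := fiber_finite hr hrlh hKcpt hN
  set Fs : Finset G := hFfin.toFinset with hFs
  have hmemFs : ∀ e, e ∈ Fs ↔ r e = v := by
    intro e; simp [hFs, Set.Finite.mem_toFinset]
  have hFne : Fs.Nonempty := by
    obtain ⟨e, he⟩ := hvr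
    exact ⟨e, (hmemFs e).mpr he⟩
  choose χ hχ hrχ using hrlh
  choose φ hφ hsφ using hs
  obtain ⟨O, hO, hOdisj⟩ := exists_disjoint_opens Fs
  set U0 : G → Set G := fun e => ((χ e).source ∩ (φ e).source) ∩ O e with hU0
  have hU0open : ∀ e, IsOpen (U0 e) :=
    fun e => (((χ e).open_source.inter (φ e).open_source)).inter (hO e).1
  have heU0 : ∀ e, e ∈ U0 e := fun e => ⟨⟨hχ e, hφ e⟩, (hO e).2⟩
  have hU0χ : ∀ e, U0 e ⊆ (χ e).source := fun e => Set.inter_subset_left.trans Set.inter_subset_left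
  have hU0φ : ∀ e, U0 e ⊆ (φ e).source := fun e => Set.inter_subset_left.trans Set.inter_subset_right
  set K : Set G := (r ⁻¹' N) \ ⋃ e ∈ Fs, U0 e with hK
  have hKc : IsCompact K := hKcpt.diff (isOpen_biUnion (fun e _ => hU0open e))
  have hrKc : IsCompact (r '' K) := hKc.image hr
  have hvK : v ∉ r '' K := by
    rintro ⟨g, hgK, hgv⟩
    exact hgK.2 (Set.mem_biUnion ((hmemFs g).mpr hgv) (heU0 g))
  -- images of the bisections under r are open
  have him_open : ∀ e, IsOpen (r '' U0 e) := by
    intro e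
    have : r '' U0 e = (χ e) '' U0 e := by rw [← hrχ e]
    rw [this]
    exact (χ e).isOpen_image_of_subset_source (hU0open e) (hU0χ e)
  set W : Set V := (interior N ∩ ⋂ e ∈ Fs, r '' U0 e) ∩ ((r '' K)ᶜ ∩ Erg r) with hW
  have hWopen : IsOpen W :=
    ((isOpen_interior.inter (isOpen_biInter_finset fun e _ => him_open e))).inter
      ((hrKc.isClosed.isOpen_compl).inter (isOpen_Erg r))
  have hvW : v ∈ W := by
    refine ⟨⟨mem_interior_iff_mem_nhds.mpr hN, ?_⟩, hvK, ⟨⟨N, hN, hKcpt⟩, hnsce⟩⟩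
    exact Set.mem_biInter fun e he => ⟨e, heU0 e, (hmemFs e).mp he⟩
  have hWErg : W ⊆ Erg r := fun w hw => hw.2.2
  have hWim : ∀ e ∈ Fs, W ⊆ r '' U0 e := by
    intro e he w hw
    exact Set.mem_iInter₂.mp hw.1.2 e he
  have hpre0 : r ⁻¹' W ⊆ ⋃ e ∈ Fs, U0 e := by
    intro g hg
    by_contra hgU
    have hgN : g ∈ r ⁻¹' N := Set.mem_preimage.mpr (interior_subset hg.1.1)
    exact hg.2.1 ⟨g, ⟨hgN, hgU⟩, rfl⟩
  set U1 : G → Set G := fun e => U0 e ∩ r ⁻¹' W with hU1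
  have hU1open : ∀ e, IsOpen (U1 e) := fun e => (hU0open e).inter (hWopen.preimage hr)
  have heU1 : ∀ e ∈ Fs, e ∈ U1 e := by
    intro e he
    exact ⟨heU0 e, by simp [Set.mem_preimage, (hmemFs e).mp he, hvW]⟩
  refine ⟨Fs.image U1, W, ⟨⟨?_, ?_, ?_, ?_, ?_⟩, hWopen, ?_⟩, hvW, hWErg⟩
  · -- pairwise disjoint
    rintro A hA B hB hAB
    simp only [Finset.coe_image, Set.mem_image, Finset.mem_coe] at hA hB
    obtain ⟨e, he, rfl⟩ := hA
    obtain ⟨f, hf, rfl⟩ := hB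
    have hef : e ≠ f := fun h => hAB (by rw [h])
    exact ((hOdisj e he f hf hef).mono
      (Set.inter_subset_left.trans Set.inter_subset_right)
      (Set.inter_subset_left.trans Set.inter_subset_right))
  · -- s-sections
    intro U hU
    obtain ⟨e, he, rfl⟩ := Finset.mem_image.mp hU
    have hsub : U1 e ⊆ (φ e).source := Set.inter_subset_left.trans (hU0φ e)
    have : IsSSection s (U1 e) = Topology.IsEmbedding ((U1 e).restrict s) := rfl
    rw [IsSSection, hsφ e]
    exact isEmbedding_restrict_of_subset_source (φ e) hsub
  · -- r-sections
    intro U hU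
    obtain ⟨e, he, rfl⟩ := Finset.mem_image.mp hU
    have hsub : U1 e ⊆ (χ e).source := Set.inter_subset_left.trans (hU0χ e)
    rw [IsSSection, hrχ e]
    exact isEmbedding_restrict_of_subset_source (χ e) hsub
  · -- preimage
    apply Set.Subset.antisymm
    · intro g hg
      obtain ⟨e, he, hge⟩ := Set.mem_iUnion₂.mp (hpre0 hg)
      exact Set.mem_iUnion₂.mpr ⟨U1 e, Finset.mem_image_of_mem U1 he, hge, hg⟩
    · intro g hg
      obtain ⟨U, hU, hgU⟩ := Set.mem_iUnion₂.mp hg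
      obtain ⟨e, he, rfl⟩ := Finset.mem_image.mp hU
      exact hgU.2
  · -- range
    intro U hU
    obtain ⟨e, he, rfl⟩ := Finset.mem_image.mp hU
    apply Set.Subset.antisymm
    · rintro w ⟨g, hg, rfl⟩
      exact hg.2
    · intro w hw
      obtain ⟨g, hg, rfl⟩ := hWim e he hw
      exact ⟨g, ⟨hg, hw⟩, rfl⟩
  · -- open
    intro U hU
    obtain ⟨e, he, rfl⟩ := Finset.mem_image.mp hU
    exact hU1open e


/-- Helper: `v ↦ (ρ v * g v : ℂ)` as an element of `C₀(V, ℂ)`. -/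
def mulCut {V : Type*} [TopologicalSpace V] (ρ : V → ℝ) (hρ : Continuous ρ)
    (g : C(V, ℝ)) (hg : HasCompactSupport ⇑g) : C₀(V, ℂ) where
  toFun v := ((ρ v * g v : ℝ) : ℂ)
  continuous_toFun := Complex.continuous_ofReal.comp (hρ.mul g.continuous)
  zero_at_infty' := by
    have h1 : HasCompactSupport (fun v => ρ v * g v) := hg.mul_left
    exact (h1.comp_left Complex.ofReal_zero).is_zero_at_infty

lemma mulCut_apply {V : Type*} [TopologicalSpace V] (ρ : V → ℝ) (hρ : Continuous ρ)
    (g : C(V, ℝ)) (hg : HasCompactSupport ⇑g) (v : V) :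
    mulCut ρ hρ g hg v = ((ρ v * g v : ℝ) : ℂ) := rfl

lemma tsupport_mulCut_subset {V : Type*} [TopologicalSpace V] (ρ : V → ℝ) (hρ : Continuous ρ)
    (g : C(V, ℝ)) (hg : HasCompactSupport ⇑g) :
    tsupport ⇑(mulCut ρ hρ g hg) ⊆ tsupport ⇑g := by
  apply closure_mono
  intro v hv
  simp only [Function.mem_support, mulCut_apply, ne_eq, Complex.ofReal_eq_zero, mul_eq_zero] at hv
  exact fun h => hv (Or.inr h)

lemma hasCompactSupport_mulCut {V : Type*} [TopologicalSpace V] (ρ : V → ℝ) (hρ : Continuous ρ)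
    (g : C(V, ℝ)) (hg : HasCompactSupport ⇑g) :
    HasCompactSupport ⇑(mulCut ρ hρ g hg) :=
  IsCompact.of_isClosed_subset hg isClosed_closure (tsupport_mulCut_subset ρ hρ g hg)

/-- Evaluation at a point as an additive monoid homomorphism. -/
def evalAM {V : Type*} [TopologicalSpace V] (v : V) : C₀(V, ℂ) →+ ℂ where
  toFun f := f v
  map_zero' := rfl
  map_add' _ _ := rfl


lemma tsupport_fun_add_subset {V : Type*} [TopologicalSpace V] (x y : V → ℂ) :
    tsupport (x + y) ⊆ tsupport x ∪ tsupport y := by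
  rw [tsupport, tsupport, tsupport, ← closure_union]
  apply closure_mono
  intro v hv
  by_contra hc
  simp only [Set.mem_union, Function.mem_support, not_or, not_not] at hc
  exact hv (by simp [Pi.add_apply, hc.1, hc.2])

theorem statement11' {V G : Type*} [TopologicalSpace V] [TopologicalSpace G]
    [LocallyCompactSpace V] [T2Space V] [LocallyCompactSpace G] [T2Space G]
    (r s : G → V) (hr : Continuous r) (hs : IsLocalHomeomorph s)
    (hrlh : IsLocalHomeomorph r) (hclosed : IsClosed (Set.range r))
    (𝒢 : Set C₀(V, ℂ))
    (h𝒢 : 𝒢 = {f : C₀(V, ℂ) | HasCompactSupport ⇑f ∧ NonnegFn ⇑f ∧ tsupport ⇑f ⊆ Erg r ∧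
      ∃ (𝒰 : Finset (Set G)) (W : Set V), IsOpenLocalRFib r s 𝒰 W ∧ tsupport ⇑f ⊆ W}) :
    (Submodule.span ℂ 𝒢 : Set C₀(V, ℂ)) =
      {f : C₀(V, ℂ) | HasCompactSupport ⇑f ∧ tsupport ⇑f ⊆ Erg r} := by
  classical
  apply Set.Subset.antisymm
  · -- span ⊆ C_c(E⁰_rg)
    have hsub : 𝒢 ⊆ {f : C₀(V, ℂ) | HasCompactSupport ⇑f ∧ tsupport ⇑f ⊆ Erg r} := by
      rw [h𝒢]; rintro f ⟨h1, _, h3, _⟩; exact ⟨h1, h3⟩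
    intro f hf
    refine Submodule.span_induction (p := fun (x : C₀(V, ℂ)) (_ : x ∈ Submodule.span ℂ 𝒢) =>
        HasCompactSupport ⇑x ∧ tsupport ⇑x ⊆ Erg r) (fun x hx => hsub hx) ?_ ?_ ?_ hf
    · refine ⟨?_, ?_⟩
      · rw [HasCompactSupport]
        have h0 : tsupport ⇑(0 : C₀(V, ℂ)) = ∅ := by
          simp [tsupport, ZeroAtInftyContinuousMap.coe_zero]
        rw [h0]; exact isCompact_empty
      · have h0 : tsupport ⇑(0 : C₀(V, ℂ)) = ∅ := by
          simp [tsupport, ZeroAtInftyContinuousMap.coe_zero]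
        rw [h0]; exact Set.empty_subset _
    · rintro x y _ _ ⟨hx1, hx2⟩ ⟨hy1, hy2⟩
      have hco : ⇑(x + y) = ⇑x + ⇑y := rfl
      have h1 : tsupport ⇑(x + y) ⊆ tsupport ⇑x ∪ tsupport ⇑y := by
        rw [hco]; exact tsupport_fun_add_subset ⇑x ⇑y
      exact ⟨IsCompact.of_isClosed_subset (hx1.union hy1) isClosed_closure h1,
        h1.trans (Set.union_subset hx2 hy2)⟩
    · rintro a x _ ⟨hx1, hx2⟩
      have hco : ⇑(a • x) = a • ⇑x := rfl
      have h1 : tsupport ⇑(a • x) ⊆ tsupport ⇑x := by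
        rw [hco]; exact closure_mono (Function.support_const_smul_subset a ⇑x)
      exact ⟨IsCompact.of_isClosed_subset hx1 isClosed_closure h1, h1.trans hx2⟩
  · -- C_c(E⁰_rg) ⊆ span
    rintro f ⟨hfc, hfErg⟩
    -- choose open local r-fibrations around each point of `Erg r`
    have hfib : ∀ w : V, w ∈ Erg r → ∃ (𝒰 : Finset (Set G)) (W : Set V),
        IsOpenLocalRFib r s 𝒰 W ∧ w ∈ W ∧ W ⊆ Erg r :=
      fun w hw => exists_openLocalRFib r s hr hs hrlh hclosed hw
    choose! 𝒰w Wfn hfib1 hfib2 hfib3 using hfib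
    -- a finite subcover of the compact support
    have hcov : tsupport ⇑f ⊆ ⋃ w : tsupport ⇑f, Wfn w :=
      fun x hx => Set.mem_iUnion.mpr ⟨⟨x, hx⟩, hfib2 x (hfErg hx)⟩
    obtain ⟨t, ht⟩ := hfc.elim_finite_subcover (fun w : tsupport ⇑f => Wfn w)
      (fun w => (hfib1 w (hfErg w.2)).2.1) hcov
    set n := t.card with hn
    set idx : Fin n → V := fun i => (((t.equivFin.symm i : {x // x ∈ t}) : (tsupport ⇑f : Set V)) : V) with hidx
    have hidxErg : ∀ i, idx i ∈ Erg r := fun i => hfErg (t.equivFin.symm i : {x // x ∈ t}).1.2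
    set sFam : Fin n → Set V := fun i => Wfn (idx i) with hsFam
    have hsopen : ∀ i, IsOpen (sFam i) := fun i => (hfib1 _ (hidxErg i)).2.1
    have hsErg : ∀ i, sFam i ⊆ Erg r := fun i => hfib3 _ (hidxErg i)
    have hcov2 : tsupport ⇑f ⊆ ⋃ i, sFam i := by
      intro x hx
      obtain ⟨w, hwt, hxw⟩ := Set.mem_iUnion₂.mp (ht hx)
      refine Set.mem_iUnion.mpr ⟨t.equivFin ⟨w, hwt⟩, ?_⟩
      simp only [hsFam, hidx, Equiv.symm_apply_apply]
      exact hxw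
    obtain ⟨g, hgsupp, hgsum, hg01, hgc⟩ :=
      exists_continuous_sum_one_of_isOpen_isCompact hsopen hfc hcov2
    -- the four nonnegative pieces
    have hre : Continuous fun v => max (f v).re 0 :=
      (Complex.continuous_re.comp (map_continuous f)).max continuous_const
    have hnre : Continuous fun v => max (-(f v).re) 0 :=
      ((Complex.continuous_re.comp (map_continuous f)).neg).max continuous_const
    have him : Continuous fun v => max (f v).im 0 :=
      (Complex.continuous_im.comp (map_continuous f)).max continuous_const
    have hnim : Continuous fun v => max (-(f v).im) 0 :=
      ((Complex.continuous_im.comp (map_continuous f)).neg).max continuous_const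
    set a : Fin n → C₀(V, ℂ) := fun i => mulCut _ hre (g i) (hgc i) with ha
    set b : Fin n → C₀(V, ℂ) := fun i => mulCut _ hnre (g i) (hgc i) with hb
    set c : Fin n → C₀(V, ℂ) := fun i => mulCut _ him (g i) (hgc i) with hc
    set d : Fin n → C₀(V, ℂ) := fun i => mulCut _ hnim (g i) (hgc i) with hd
    -- each piece belongs to 𝒢
    have hmem : ∀ (ρ : V → ℝ) (hρ : Continuous ρ), (∀ v, 0 ≤ ρ v) → ∀ i : Fin n,
        mulCut ρ hρ (g i) (hgc i) ∈ 𝒢 := by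
      intro ρ hρ hρ0 i
      rw [h𝒢]
      have hts : tsupport ⇑(mulCut ρ hρ (g i) (hgc i)) ⊆ sFam i :=
        (tsupport_mulCut_subset _ _ _ _).trans (hgsupp i)
      refine ⟨hasCompactSupport_mulCut _ _ _ _, ?_, hts.trans (hsErg i), ?_⟩
      · intro v
        rw [mulCut_apply]
        exact Complex.zero_le_real.mpr (mul_nonneg (hρ0 v) (hg01 i v).1)
      · exact ⟨𝒰w (idx i), Wfn (idx i), hfib1 _ (hidxErg i), hts⟩
    -- the decomposition of f
    have hfeq : f = ∑ i, (a i - b i + Complex.I • c i - Complex.I • d i) := by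
      ext v
      have hv : (∑ i, (a i - b i + Complex.I • c i - Complex.I • d i)) v
          = ∑ i, ((a i - b i + Complex.I • c i - Complex.I • d i) v) :=
        map_sum (evalAM v) _ _
      rw [hv]
      have hterm : ∀ i : Fin n,
          (a i - b i + Complex.I • c i - Complex.I • d i) v = f v * ((g i v : ℝ) : ℂ) := by
        intro i
        have h1 : max (f v).re 0 - max (-(f v).re) 0 = (f v).re := max_zero_sub_eq_self _
        have h2 : max (f v).im 0 - max (-(f v).im) 0 = (f v).im := max_zero_sub_eq_self _
        have h3 : f v = ((f v).re : ℂ) + ((f v).im : ℂ) * Complex.I := (Complex.re_add_im _).symm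
        rw [ZeroAtInftyContinuousMap.sub_apply, ZeroAtInftyContinuousMap.add_apply,
          ZeroAtInftyContinuousMap.sub_apply, ZeroAtInftyContinuousMap.smul_apply,
          ZeroAtInftyContinuousMap.smul_apply]
        show ((max (f v).re 0 * g i v : ℝ) : ℂ) - ((max (-(f v).re) 0 * g i v : ℝ) : ℂ)
            + Complex.I • ((max (f v).im 0 * g i v : ℝ) : ℂ)
            - Complex.I • ((max (-(f v).im) 0 * g i v : ℝ) : ℂ) = f v * ((g i v : ℝ) : ℂ)
        have h1c : ((max (f v).re 0 : ℝ) : ℂ) - ((max (-(f v).re) 0 : ℝ) : ℂ) = ((f v).re : ℂ) := by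
          rw [← Complex.ofReal_sub, h1]
        have h2c : ((max (f v).im 0 : ℝ) : ℂ) - ((max (-(f v).im) 0 : ℝ) : ℂ) = ((f v).im : ℂ) := by
          rw [← Complex.ofReal_sub, h2]
        rw [smul_eq_mul, smul_eq_mul]
        conv_rhs => rw [h3]
        push_cast
        linear_combination ((g i v : ℝ) : ℂ) * h1c + Complex.I * ((g i v : ℝ) : ℂ) * h2c
      rw [Finset.sum_congr rfl (fun i _ => hterm i), ← Finset.mul_sum]
      by_cases hvs : v ∈ tsupport ⇑f
      · have h1 : (∑ i : Fin n, ⇑(g i)) v = 1 := hgsum hvs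
        have h2 : (∑ i : Fin n, g i v) = (1 : ℝ) := by
          rw [Finset.sum_apply] at h1; exact h1
        have h3 : (∑ i : Fin n, ((g i v : ℝ) : ℂ)) = 1 := by
          rw [← Complex.ofReal_sum, h2, Complex.ofReal_one]
        rw [h3, mul_one]
      · rw [image_eq_zero_of_notMem_tsupport hvs, zero_mul]
    rw [hfeq]
    apply Submodule.sum_mem
    intro i _
    have hma : a i ∈ Submodule.span ℂ 𝒢 := Submodule.subset_span (hmem _ hre (fun v => le_max_right _ _) i)
    have hmb : b i ∈ Submodule.span ℂ 𝒢 := Submodule.subset_span (hmem _ hnre (fun v => le_max_right _ _) i)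
    have hmc : c i ∈ Submodule.span ℂ 𝒢 := Submodule.subset_span (hmem _ him (fun v => le_max_right _ _) i)
    have hmd : d i ∈ Submodule.span ℂ 𝒢 := Submodule.subset_span (hmem _ hnim (fun v => le_max_right _ _) i)
    exact sub_mem (add_mem (sub_mem hma hmb) (Submodule.smul_mem _ _ hmc))
      (Submodule.smul_mem _ _ hmd)

theorem statement11'' {V G : Type*} [TopologicalSpace V] [TopologicalSpace G]
    [LocallyCompactSpace V] [T2Space V] [LocallyCompactSpace G] [T2Space G]
    (r s : G → V) (hr : Continuous r) (hs : IsLocalHomeomorph s)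
    (hrlh : IsLocalHomeomorph r) (hclosed : IsClosed (Set.range r))
    (𝒢 : Set C₀(V, ℂ))
    (h𝒢 : 𝒢 = {f : C₀(V, ℂ) | HasCompactSupport ⇑f ∧ NonnegFn ⇑f ∧ tsupport ⇑f ⊆ Erg r ∧
      ∃ (𝒰 : Finset (Set G)) (W : Set V), IsOpenLocalRFib r s 𝒰 W ∧ tsupport ⇑f ⊆ W}) :
    closure ((NonUnitalStarAlgebra.adjoin ℂ 𝒢 : NonUnitalStarSubalgebra ℂ C₀(V, ℂ)) :
        Set C₀(V, ℂ)) = {f : C₀(V, ℂ) | ∀ v ∉ Erg r, f v = 0} := by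
  classical
  have hspan := statement11' r s hr hs hrlh hclosed 𝒢 h𝒢
  -- evaluation at a point is continuous
  have heval : ∀ v : V, Continuous (fun f : C₀(V, ℂ) => f v) := by
    intro v
    have hlip : LipschitzWith 1 (fun f : C₀(V, ℂ) => f v) := by
      apply LipschitzWith.mk_one
      intro f g
      rw [← ZeroAtInftyContinuousMap.dist_toBCF_eq_dist]
      exact BoundedContinuousFunction.dist_coe_le_dist (f := f.toBCF) (g := g.toBCF) v
    exact hlip.continuous
  have hSclosed : IsClosed {f : C₀(V, ℂ) | ∀ v ∉ Erg r, f v = 0} := by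
    have hrw : {f : C₀(V, ℂ) | ∀ v ∉ Erg r, f v = 0} =
        ⋂ (v : V) (_ : v ∉ Erg r), (fun f : C₀(V, ℂ) => f v) ⁻¹' {0} := by
      ext f; simp [Set.mem_iInter]
    rw [hrw]
    exact isClosed_iInter fun v => isClosed_iInter fun _ =>
      isClosed_singleton.preimage (heval v)
  -- the target set as a non-unital star subalgebra
  let Ssub : NonUnitalStarSubalgebra ℂ C₀(V, ℂ) :=
    { carrier := {f : C₀(V, ℂ) | ∀ v ∉ Erg r, f v = 0}
      add_mem' := fun {x y} hx hy v hv => by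
        rw [ZeroAtInftyContinuousMap.add_apply, hx v hv, hy v hv, add_zero]
      zero_mem' := fun v hv => rfl
      mul_mem' := fun {x y} hx hy v hv => by
        rw [ZeroAtInftyContinuousMap.mul_apply, hx v hv, zero_mul]
      smul_mem' := fun a x hx v hv => by
        rw [ZeroAtInftyContinuousMap.smul_apply, hx v hv, smul_zero]
      star_mem' := fun {x} hx v hv => by
        rw [ZeroAtInftyContinuousMap.star_apply, hx v hv, star_zero] }
  have hGS : 𝒢 ⊆ {f : C₀(V, ℂ) | ∀ v ∉ Erg r, f v = 0} := by
    rw [h𝒢]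
    rintro f ⟨_, _, hsupp, _⟩ v hv
    exact image_eq_zero_of_notMem_tsupport fun h => hv (hsupp h)
  apply Set.Subset.antisymm
  · apply closure_minimal _ hSclosed
    exact fun x hx => NonUnitalStarAlgebra.adjoin_le (S := Ssub) hGS hx
  · intro f hf
    rw [Metric.mem_closure_iff]
    intro ε hε
    have hε2 : (0 : ℝ) < ε / 2 := by positivity
    set K : Set V := {v | ε / 2 ≤ ‖f v‖} with hKdef
    have hKclosed : IsClosed K :=
      isClosed_le continuous_const (continuous_norm.comp (map_continuous f))
    obtain ⟨C, hCc, hCsub⟩ := Filter.mem_cocompact.mp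
      (Metric.tendsto_nhds.mp f.zero_at_infty' (ε / 2) hε2)
    have hKC : K ⊆ C := by
      intro v hv
      by_contra hvC
      have := hCsub hvC
      simp only [Set.mem_setOf_eq, dist_zero_right] at this
      exact absurd hv (not_le.mpr this)
    have hKcpt : IsCompact K := hCc.of_isClosed_subset hKclosed hKC
    have hKErg : K ⊆ Erg r := by
      intro v hv
      by_contra hvE
      have h0 : f v = 0 := hf v hvE
      have hv' : ε / 2 ≤ ‖f v‖ := hv
      rw [h0] at hv'
      simp only [norm_zero] at hv'
      linarith
    obtain ⟨k, hkc, hKik, hkErg⟩ := exists_compact_between hKcpt (isOpen_Erg r) hKErg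
    obtain ⟨g, hg1, hg0, hgcs, hg01⟩ := exists_continuous_one_zero_of_isCompact hKcpt
      isOpen_interior.isClosed_compl (Set.disjoint_left.mpr fun x hx hx' => hx' (hKik hx))
    have hcont : Continuous fun v => f v * ((g v : ℝ) : ℂ) :=
      (map_continuous f).mul (Complex.continuous_ofReal.comp g.continuous)
    have hsub0 : Function.support (fun v => f v * ((g v : ℝ) : ℂ)) ⊆ Function.support ⇑g := by
      intro v hv
      simp only [Function.mem_support, ne_eq, mul_eq_zero, Complex.ofReal_eq_zero, not_or] at hv
      exact hv.2
    have hhc : HasCompactSupport fun v => f v * ((g v : ℝ) : ℂ) :=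
      IsCompact.of_isClosed_subset hgcs isClosed_closure (closure_mono hsub0)
    set h : C₀(V, ℂ) := ⟨⟨fun v => f v * ((g v : ℝ) : ℂ), hcont⟩, hhc.is_zero_at_infty⟩ with hh
    have hcoe : ⇑h = fun v => f v * ((g v : ℝ) : ℂ) := rfl
    have hgerg : tsupport ⇑g ⊆ Erg r := by
      have h1 : Function.support ⇑g ⊆ interior k := by
        intro v hv
        by_contra hvk
        exact hv (hg0 hvk)
      exact (closure_mono h1).trans ((closure_minimal interior_subset hkc.isClosed).trans hkErg)
    have hhsupp : tsupport ⇑h ⊆ Erg r := by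
      rw [hcoe]
      exact (closure_mono hsub0).trans hgerg
    have hhcs : HasCompactSupport ⇑h := by rw [hcoe]; exact hhc
    have hhspan : h ∈ Submodule.span ℂ 𝒢 := by
      have : h ∈ (Submodule.span ℂ 𝒢 : Set C₀(V, ℂ)) := by
        rw [hspan]; exact ⟨hhcs, hhsupp⟩
      exact this
    have hhadj : h ∈ ((NonUnitalStarAlgebra.adjoin ℂ 𝒢 : NonUnitalStarSubalgebra ℂ C₀(V, ℂ)) :
        Set C₀(V, ℂ)) := by
      have hle : Submodule.span ℂ 𝒢 ≤
          (NonUnitalStarAlgebra.adjoin ℂ 𝒢).toNonUnitalSubalgebra.toSubmodule :=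
        Submodule.span_le.mpr (NonUnitalStarAlgebra.subset_adjoin ℂ 𝒢)
      exact hle hhspan
    refine ⟨h, hhadj, ?_⟩
    have hbound : dist f h ≤ ε / 2 := by
      rw [dist_eq_norm, ← ZeroAtInftyContinuousMap.norm_toBCF_eq_norm]
      apply (BoundedContinuousFunction.norm_le hε2.le).mpr
      intro v
      have hfh : (f - h).toBCF v = f v - f v * ((g v : ℝ) : ℂ) := rfl
      rw [hfh]
      have hfac : f v - f v * ((g v : ℝ) : ℂ) = f v * ((1 : ℂ) - ((g v : ℝ) : ℂ)) := by ring
      rw [hfac, norm_mul]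
      by_cases hvK : v ∈ K
      · have : g v = 1 := hg1 hvK
        simp [this]
        positivity
      · have hlt : ‖f v‖ ≤ ε / 2 := le_of_not_ge hvK
        have h1g : ‖(1 : ℂ) - ((g v : ℝ) : ℂ)‖ ≤ 1 := by
          have : ((1 : ℂ) - ((g v : ℝ) : ℂ)) = (((1 - g v : ℝ)) : ℂ) := by push_cast; ring
          rw [this, Complex.norm_real]
          rw [Real.norm_eq_abs, abs_le]
          constructor <;> [linarith [(hg01 v).2]; linarith [(hg01 v).1]]
        calc ‖f v‖ * ‖(1 : ℂ) - ((g v : ℝ) : ℂ)‖ ≤ (ε / 2) * 1 :=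
              mul_le_mul hlt h1g (norm_nonneg _) hε2.le
          _ = ε / 2 := mul_one _
    calc dist f h ≤ ε / 2 := hbound
      _ < ε := by linarith


/-- Suppose `r` is a local homeomorphism and `r(E¹)` is closed.  Let `𝒢` be
the set of nonnegative `f ∈ C_c(E⁰_rg)` with `supp f ⊆ W` for some open local `r`-fibration
`(𝒰, W)`.  Then the linear span of `𝒢` equals `C_c(E⁰_rg)`, and `𝒢` generates `C₀(E⁰_rg)`
as a C*-algebra. -/
theorem statement11 {V G : Type*} [TopologicalSpace V] [TopologicalSpace G]
    [LocallyCompactSpace V] [T2Space V] [LocallyCompactSpace G] [T2Space G]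
    (r s : G → V) (hr : Continuous r) (hs : IsLocalHomeomorph s)
    (hrlh : IsLocalHomeomorph r) (hclosed : IsClosed (Set.range r))
    (𝒢 : Set C₀(V, ℂ))
    (h𝒢 : 𝒢 = {f : C₀(V, ℂ) | HasCompactSupport ⇑f ∧ NonnegFn ⇑f ∧ tsupport ⇑f ⊆ Erg r ∧
      ∃ (𝒰 : Finset (Set G)) (W : Set V), IsOpenLocalRFib r s 𝒰 W ∧ tsupport ⇑f ⊆ W}) :
    (Submodule.span ℂ 𝒢 : Set C₀(V, ℂ)) =
      {f : C₀(V, ℂ) | HasCompactSupport ⇑f ∧ tsupport ⇑f ⊆ Erg r} ∧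
    closure ((NonUnitalStarAlgebra.adjoin ℂ 𝒢 : NonUnitalStarSubalgebra ℂ C₀(V, ℂ)) :
        Set C₀(V, ℂ)) = {f : C₀(V, ℂ) | ∀ v ∉ Erg r, f v = 0} :=
  ⟨statement11' r s hr hs hrlh hclosed 𝒢 h𝒢, statement11'' r s hr hs hrlh hclosed 𝒢 h𝒢⟩

end TopGraphPaper
end
end

section
/- Let E be a topological graph, let ℬ be an open base for the topology on E¹ consisting of s-sections, and let ℱ ⊆ C_c(E¹) be a collection of nonnegative functions such that osupp(x) is an s-section for every x ∈ ℱ. Suppose that for each U ∈ ℬ, the linear span of {x ∈ ℱ : osupp(x) ⊆ U} is dense in C₀(U) in the supremum norm. Then the linear span of ℱ is dense in C_c(E¹) with respect to ‖·‖_{C₀(E⁰)}: for every x ∈ C_c(E¹) and every ε > 0 there exists y in the linear span of ℱ with ‖x − y‖_{C₀(E⁰)} < ε. -/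
open scoped ZeroAtInfty CompactlySupported ComplexOrder

noncomputable section

namespace TopGraphPaper

variable {V G : Type*} [TopologicalSpace V] [TopologicalSpace G]

variable {B : Type*} [NonUnitalCStarAlgebra B]

variable {V G : Type*} [TopologicalSpace V] [TopologicalSpace G]

variable {B : Type*} [NonUnitalCStarAlgebra B]

private lemma support_span_subset {G : Type*} [TopologicalSpace G] (ℱ : Set C_c(G, ℂ))
    (U : Set G) {y : C_c(G, ℂ)}
    (hy : y ∈ Submodule.span ℂ {x ∈ ℱ | Function.support ⇑x ⊆ U}) :
    ∀ e ∉ U, y e = 0 := by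
  induction hy using Submodule.span_induction with
  | mem z hz => exact fun e he => Function.notMem_support.mp fun h => he (hz.2 h)
  | zero => simp
  | add a b _ _ ha hb => intro e he; simp [ha e he, hb e he]
  | smul c a _ ha => intro e he; simp [ha e he]

/-- If `ℬ` is an open base of `s`-sections for `E¹` and `ℱ ⊆ C_c(E¹)` is a
family of nonnegative functions supported on `s`-sections whose span is sup-norm dense in
`C₀(U)` for each `U ∈ ℬ`, then the span of `ℱ` is dense in `C_c(E¹)` for the norm
`‖·‖_{C₀(E⁰)}`. -/
theorem statement12 {V G : Type*} [TopologicalSpace V] [TopologicalSpace G]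
    [LocallyCompactSpace V] [T2Space V] [LocallyCompactSpace G] [T2Space G]
    (r s : G → V) (hr : Continuous r) (hs : IsLocalHomeomorph s)
    (ℬ : Set (Set G)) (hbasis : TopologicalSpace.IsTopologicalBasis ℬ)
    (hBsec : ∀ U ∈ ℬ, IsSSection s U)
    (ℱ : Set C_c(G, ℂ))
    (hF : ∀ x ∈ ℱ, NonnegFn ⇑x ∧ IsSSection s (Function.support ⇑x))
    (hdense : ∀ U ∈ ℬ, ∀ g : C₀(G, ℂ), (∀ e ∉ U, g e = 0) → ∀ ε > (0 : ℝ),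
      ∃ y ∈ Submodule.span ℂ {x ∈ ℱ | Function.support ⇑x ⊆ U}, ∀ e, ‖g e - y e‖ ≤ ε) :
    ∀ x : C_c(G, ℂ), ∀ ε > (0 : ℝ),
      ∃ y ∈ Submodule.span ℂ ℱ, gnorm s (⇑x - ⇑y) < ε := by
  classical
  intro x ε hε
  have hKc : IsCompact (tsupport ⇑x) := x.hasCompactSupport'
  -- finite subcover of the support by basic s-sections
  have hcover : tsupport ⇑x ⊆ ⋃ U : ℬ, (U : Set G) := by
    intro e _
    obtain ⟨U, hU, heU, -⟩ := hbasis.exists_subset_of_mem_open (Set.mem_univ e) isOpen_univ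
    exact Set.mem_iUnion.2 ⟨⟨U, hU⟩, heU⟩
  obtain ⟨t, ht⟩ := hKc.elim_finite_subcover (fun U : ℬ => (U : Set G))
    (fun U => hbasis.isOpen U.2) hcover
  set n := t.card with hn
  set c : Fin n → Set G := fun i => ((t.equivFin.symm i : ↥t) : ↥ℬ) with hc
  have hcB : ∀ i, c i ∈ ℬ := fun i => ((t.equivFin.symm i : ↥t) : ↥ℬ).2
  have hco : ∀ i, IsOpen (c i) := fun i => hbasis.isOpen (hcB i)
  have hcover2 : tsupport ⇑x ⊆ ⋃ i, c i := by
    refine ht.trans ?_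
    intro e he
    simp only [Set.mem_iUnion] at he ⊢
    obtain ⟨U, hU, heU⟩ := he
    refine ⟨t.equivFin ⟨U, hU⟩, ?_⟩
    simpa [hc] using heU
  -- partition of unity
  obtain ⟨φ, hφsupp, hφsum, hφmem, hφcp⟩ :=
    exists_continuous_sum_one_of_isOpen_isCompact hco hKc hcover2
  -- the pieces of x, as elements of C₀
  set m : ℝ := (n : ℝ) + 1 with hm
  have hm1 : (1 : ℝ) ≤ m := by
    have : (0:ℝ) ≤ (n:ℝ) := Nat.cast_nonneg n
    rw [hm]; linarith
  clear_value m
  have hmne : m ≠ 0 := by linarith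
  obtain ⟨δ, hδ, hδle⟩ : ∃ δ : ℝ, 0 < δ ∧ m ^ 2 * δ ≤ ε / 2 :=
    ⟨ε / (2 * m ^ 2), by positivity, le_of_eq (by field_simp)⟩
  have hgc : ∀ i : Fin n, Continuous fun e => (φ i e : ℂ) * x e := fun i =>
    (Complex.continuous_ofReal.comp (φ i).continuous).mul x.continuous
  have hgcp : ∀ i : Fin n, HasCompactSupport fun e => (φ i e : ℂ) * x e := fun i => by
    refine x.hasCompactSupport'.mono ?_
    intro e he
    simp only [Function.mem_support, ne_eq] at he ⊢
    exact fun h => he (mul_eq_zero_of_right _ h)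
  set g : Fin n → C₀(G, ℂ) := fun i =>
    ⟨⟨fun e => (φ i e : ℂ) * x e, hgc i⟩, (hgcp i).is_zero_at_infty⟩ with hg
  have hgval : ∀ i e, g i e = (φ i e : ℂ) * x e := fun i e => rfl
  have hgz : ∀ i, ∀ e ∉ c i, g i e = 0 := by
    intro i e he
    have : φ i e = 0 := image_eq_zero_of_notMem_tsupport (fun h => he (hφsupp i h))
    simp [hgval, this]
  -- approximate each piece
  choose y hy hyapp using fun i : Fin n => hdense (c i) (hcB i) (g i) (hgz i) δ hδ
  have hysupp : ∀ i, ∀ e ∉ c i, y i e = 0 := fun i => support_span_subset ℱ (c i) (hy i)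
  refine ⟨∑ i, y i, Submodule.sum_mem _ fun i _ =>
    Submodule.span_mono (Set.sep_subset _ _) (hy i), ?_⟩
  -- pointwise decomposition
  set d : G → ℂ := ⇑x - ⇑(∑ i, y i) with hd
  have hyc : ∀ e, (∑ i, y i) e = ∑ i, y i e := by
    intro e
    simp [CompactlySupportedContinuousMap.coe_sum]
  have hdec : ∀ e, d e = ∑ i, (g i e - y i e) := by
    intro e
    have h1 : ∑ i, g i e = x e := by
      have : ∑ i, g i e = ((∑ i, φ i e : ℝ) : ℂ) * x e := by
        simp [hgval, Finset.sum_mul]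
      rw [this]
      by_cases hx0 : x e = 0
      · simp [hx0]
      · have he : e ∈ tsupport ⇑x := subset_tsupport _ hx0
        have := hφsum he
        simp only [ContinuousMap.coe_sum, Finset.sum_apply, Pi.one_apply] at this
        rw [this]; simp
    rw [Finset.sum_sub_distrib, h1, hd]
    simp [hyc e]
  have hdbound : ∀ e, ‖d e‖ ≤ m * δ := by
    intro e
    rw [hdec e]
    calc ‖∑ i, (g i e - y i e)‖ ≤ ∑ i, ‖g i e - y i e‖ := norm_sum_le _ _
      _ ≤ ∑ _i : Fin n, δ := Finset.sum_le_sum fun i _ => hyapp i e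
      _ = n * δ := by simp [mul_comm]
      _ ≤ m * δ := by nlinarith [hδ.le]
  have hdz : ∀ e, d e ≠ 0 → ∃ i, e ∈ c i := by
    intro e hde
    by_contra h
    push_neg at h
    refine hde ?_
    rw [hdec e]
    refine Finset.sum_eq_zero fun i _ => ?_
    rw [hgz i e (h i), hysupp i e (h i), sub_zero]
  -- the fiberwise estimate
  have key : ∀ v : V, Real.sqrt (∑' e : (s ⁻¹' {v} : Set G), ‖d (e : G)‖ ^ 2) ≤ ε / 2 := by
    intro v
    set F : Set G := s ⁻¹' {v} with hF'
    set q : F → ℝ := fun e => ‖d (e : G)‖ ^ 2 with hq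
    set S : Fin n → Set F := fun i => {e : F | (e : G) ∈ c i} with hS
    have hSsub : ∀ i, (S i).Subsingleton := by
      intro i e₁ h₁ e₂ h₂
      have hinj := (hBsec (c i) (hcB i)).injective
      have : ((⟨(e₁ : G), h₁⟩ : c i) : Set.Elem (c i)) = ⟨(e₂ : G), h₂⟩ := by
        apply hinj
        show s (e₁ : G) = s (e₂ : G)
        have := e₁.2; have := e₂.2
        simp only [hF', Set.mem_preimage, Set.mem_singleton_iff] at this ⊢
        rw [e₁.2, e₂.2]
      have h' : (e₁ : G) = (e₂ : G) := congrArg (Subtype.val : {a // a ∈ c i} → G) this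
      exact Subtype.ext h'
    have hsupp : Function.support q ⊆ ⋃ i, S i := by
      intro e he
      simp only [Function.mem_support, hq] at he
      have : d (e : G) ≠ 0 := by
        intro h; exact he (by simp [h])
      obtain ⟨i, hi⟩ := hdz _ this
      exact Set.mem_iUnion.2 ⟨i, hi⟩
    have hfin : (Function.support q).Finite :=
      (Set.finite_iUnion fun i => (hSsub i).finite).subset hsupp
    have htsum : ∑' e : F, q e = ∑ e ∈ hfin.toFinset, q e :=
      tsum_eq_sum (fun b hb => by
        by_contra h
        exact hb (hfin.mem_toFinset.2 h))
    have hcard : (hfin.toFinset.card : ℝ) ≤ m := by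
      have h1 : hfin.toFinset ⊆ Finset.univ.biUnion fun i : Fin n =>
          ((hSsub i).finite).toFinset := by
        intro e he
        have := hsupp (hfin.mem_toFinset.1 he)
        obtain ⟨i, hi⟩ := Set.mem_iUnion.1 this
        exact Finset.mem_biUnion.2 ⟨i, Finset.mem_univ i, (Set.Finite.mem_toFinset _).2 hi⟩
      have h2 : hfin.toFinset.card ≤ n := by
        calc hfin.toFinset.card ≤ _ := Finset.card_le_card h1
          _ ≤ ∑ i : Fin n, ((hSsub i).finite).toFinset.card := Finset.card_biUnion_le
          _ ≤ ∑ _i : Fin n, 1 := Finset.sum_le_sum fun i _ => by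
              refine Finset.card_le_one.2 fun a ha b hb => ?_
              exact hSsub i ((Set.Finite.mem_toFinset _).1 ha) ((Set.Finite.mem_toFinset _).1 hb)
          _ = n := by simp
      calc (hfin.toFinset.card : ℝ) ≤ n := by exact_mod_cast h2
        _ ≤ m := by simp [hm]
    have hsum : ∑' e : F, q e ≤ m * (m * δ) ^ 2 := by
      rw [htsum]
      calc ∑ e ∈ hfin.toFinset, q e ≤ hfin.toFinset.card • ((m * δ) ^ 2) := by
            refine Finset.sum_le_card_nsmul _ _ _ fun e _ => ?_
            have := hdbound (e : G)
            simp only [hq]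
            have h0 : (0:ℝ) ≤ ‖d (e:G)‖ := norm_nonneg _
            nlinarith
        _ = (hfin.toFinset.card : ℝ) * (m * δ) ^ 2 := by simp [nsmul_eq_mul]
        _ ≤ m * (m * δ) ^ 2 := by
            have : (0:ℝ) ≤ (m * δ)^2 := sq_nonneg _
            nlinarith
    calc Real.sqrt (∑' e : F, q e) ≤ Real.sqrt ((m ^ 2 * δ) ^ 2) := by
          refine Real.sqrt_le_sqrt ?_
          calc ∑' e : F, q e ≤ m * (m * δ) ^ 2 := hsum
            _ ≤ (m ^ 2 * δ) ^ 2 := by nlinarith [hδ.le, sq_nonneg (m * δ)]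
      _ = m ^ 2 * δ := Real.sqrt_sq (by positivity)
      _ ≤ ε / 2 := hδle
  have : gnorm s d ≤ ε / 2 := Real.iSup_le (fun v => key v) (by positivity)
  linarith [this]


end TopGraphPaper
end
end
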